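/- arXiv:2207.11732 — 5 statements merged into one kernel-verified Lean document; each statement's English description precedes it below -/
import Mathlib

section
/- For finite positive measures η and χ on ℝ with finite first moments and equal total mass, η is smaller than χ in convex-decreasing order (i.e., ∫ f dη ≤ ∫ f dχ for all convex non-increasing f : ℝ → ℝ) if and only if P_η(k) ≤ P_χ(k) for all k ∈ ℝ, where P_η(k) = ∫ (k-x)^+ η(dx). -/
open MeasureTheory Set intervalIntegral

noncomputable def put (η : Measure ℝ) (k : ℝ) : ℝ := ∫ x, max (k - x) 0 ∂η

lemma convexOn_shift_ineq {f : ℝ → ℝ} (hf : ConvexOn ℝ Set.univ f) {a b d : ℝ}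
    (hab : a ≤ b) (hd : 0 ≤ d) : f (a + d) - f a ≤ f (b + d) - f b := by
  rcases eq_or_lt_of_le hab with rfl | hab
  · exact le_rfl
  rcases eq_or_lt_of_le hd with rfl | hd
  · simp
  set t : ℝ := (b - a) / (b - a + d) with ht
  have hden : 0 < b - a + d := by linarith
  have ht0 : 0 ≤ t := div_nonneg (by linarith) hden.le
  have ht1 : t ≤ 1 := by
    rw [ht, div_le_one hden]; linarith
  have hs0 : 0 ≤ 1 - t := by linarith
  have h1 : f b ≤ t * f (b + d) + (1 - t) * f a := by
    have := hf.2 (mem_univ (b + d)) (mem_univ a) ht0 hs0 (by ring)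
    have hpt : t • (b + d) + (1 - t) • a = b := by
      rw [smul_eq_mul, smul_eq_mul, ht]
      field_simp
      ring
    rwa [hpt] at this
  have h2 : f (a + d) ≤ (1 - t) * f (b + d) + t * f a := by
    have := hf.2 (mem_univ (b + d)) (mem_univ a) hs0 ht0 (by ring)
    have hpt : (1 - t) • (b + d) + t • a = a + d := by
      rw [smul_eq_mul, smul_eq_mul, ht]
      field_simp
      ring
    rwa [hpt] at this
  linarith

lemma integrable_shift_one {f : ℝ → ℝ} (hf : ConvexOn ℝ Set.univ f) (hanti : Antitone f)
    (hcont : Continuous f) {μ : Measure ℝ} [IsFiniteMeasure μ] (hi : Integrable f μ) :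
    Integrable (fun x => f (x + 1)) μ := by
  refine Integrable.mono' (hi.abs.add (integrable_const (|f 1| + |f 1 - f 0|)))
    ((hcont.comp (continuous_id.add continuous_const)).aestronglyMeasurable) ?_
  refine Filter.Eventually.of_forall fun x => ?_
  simp only [Real.norm_eq_abs, Pi.add_apply]
  rcases le_total x 0 with hx | hx
  · have h1 : f (x + 1) ≤ f x := hanti (by linarith)
    have h2 : f 1 ≤ f (x + 1) := hanti (by linarith)
    rw [abs_le]
    refine ⟨?_, ?_⟩
    · have h3 := neg_abs_le (f 1)
      have h4 := abs_nonneg (f x)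
      have h5 := abs_nonneg (f 1 - f 0)
      linarith
    · have h3 := le_abs_self (f x)
      have h4 := abs_nonneg (f 1)
      have h5 := abs_nonneg (f 1 - f 0)
      linarith
  · have h1 : f (x + 1) ≤ f x := hanti (by linarith)
    have h2 : f (0 + 1) - f 0 ≤ f (x + 1) - f x := convexOn_shift_ineq hf hx zero_le_one
    simp only [zero_add] at h2
    rw [abs_le]
    refine ⟨?_, ?_⟩
    · have h3 := neg_abs_le (f x)
      have h4 := neg_abs_le (f 1 - f 0)
      have h5 := abs_nonneg (f 1)
      linarith
    · have h3 := le_abs_self (f x)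
      have h4 := abs_nonneg (f 1)
      have h5 := abs_nonneg (f 1 - f 0)
      linarith

noncomputable def tentAvg (F : ℝ → ℝ) (h x : ℝ) : ℝ :=
  (4 / h ^ 2) * ((∫ u in x..(x + h / 2), F u * (u - x)) +
    ∫ u in (x + h / 2)..(x + h), F u * (x + h - u))

-- weight integrals
lemma wint1 (x h : ℝ) : (∫ u in x..(x + h / 2), (u - x)) = h ^ 2 / 8 := by
  have h1 := intervalIntegral.integral_comp_sub_right (a := x) (b := x + h / 2)
    (f := fun u => u) x
  simp only [sub_self, add_sub_cancel_left] at h1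
  rw [h1, integral_id]
  ring

lemma wint2 (x h : ℝ) : (∫ u in (x + h / 2)..(x + h), (x + h - u)) = h ^ 2 / 8 := by
  have := intervalIntegral.integral_comp_sub_left (a := x + h / 2) (b := x + h)
    (f := fun u => u) (x + h)
  rw [this]
  simp only [sub_self]
  have : x + h - (x + h / 2) = h / 2 := by ring
  rw [this, integral_id]
  ring

lemma tentAvg_le {F : ℝ → ℝ} (hF : Continuous F) (hanti : Antitone F) {h : ℝ} (h0 : 0 < h)
    (x : ℝ) : tentAvg F h x ≤ F x := by
  have h2 : (0:ℝ) < h ^ 2 := by positivity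
  have key1 : (∫ u in x..(x + h / 2), F u * (u - x)) ≤ ∫ u in x..(x + h / 2), F x * (u - x) := by
    apply intervalIntegral.integral_mono_on (by linarith)
    · exact ((hF.mul (by continuity)).intervalIntegrable _ _)
    · exact ((continuous_const.mul (by continuity)).intervalIntegrable _ _)
    · intro u hu
      exact mul_le_mul_of_nonneg_right (hanti hu.1) (by linarith [hu.1])
  have key2 : (∫ u in (x + h / 2)..(x + h), F u * (x + h - u)) ≤
      ∫ u in (x + h / 2)..(x + h), F x * (x + h - u) := by
    apply intervalIntegral.integral_mono_on (by linarith)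
    · exact ((hF.mul (by continuity)).intervalIntegrable _ _)
    · exact ((continuous_const.mul (by continuity)).intervalIntegrable _ _)
    · intro u hu
      exact mul_le_mul_of_nonneg_right (hanti (by linarith [hu.1])) (by linarith [hu.2])
  have e1 : (∫ u in x..(x + h / 2), F x * (u - x)) = F x * (h ^ 2 / 8) := by
    rw [intervalIntegral.integral_const_mul, wint1]
  have e2 : (∫ u in (x + h / 2)..(x + h), F x * (x + h - u)) = F x * (h ^ 2 / 8) := by
    rw [intervalIntegral.integral_const_mul, wint2]
  have : tentAvg F h x ≤ (4 / h ^ 2) * (F x * (h ^ 2 / 8) + F x * (h ^ 2 / 8)) := by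
    unfold tentAvg
    apply mul_le_mul_of_nonneg_left _ (by positivity)
    exact add_le_add (le_of_le_of_eq key1 e1) (le_of_le_of_eq key2 e2)
  calc tentAvg F h x ≤ (4 / h ^ 2) * (F x * (h ^ 2 / 8) + F x * (h ^ 2 / 8)) := this
    _ = F x := by field_simp; ring

lemma le_tentAvg {F : ℝ → ℝ} (hF : Continuous F) (hanti : Antitone F) {h : ℝ} (h0 : 0 < h)
    (x : ℝ) : F (x + h) ≤ tentAvg F h x := by
  have h2 : (0:ℝ) < h ^ 2 := by positivity
  have key1 : (∫ u in x..(x + h / 2), F (x + h) * (u - x)) ≤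
      ∫ u in x..(x + h / 2), F u * (u - x) := by
    apply intervalIntegral.integral_mono_on (by linarith)
    · exact ((continuous_const.mul (by continuity)).intervalIntegrable _ _)
    · exact ((hF.mul (by continuity)).intervalIntegrable _ _)
    · intro u hu
      exact mul_le_mul_of_nonneg_right (hanti (by linarith [hu.2])) (by linarith [hu.1])
  have key2 : (∫ u in (x + h / 2)..(x + h), F (x + h) * (x + h - u)) ≤
      ∫ u in (x + h / 2)..(x + h), F u * (x + h - u) := by
    apply intervalIntegral.integral_mono_on (by linarith)
    · exact ((continuous_const.mul (by continuity)).intervalIntegrable _ _)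
    · exact ((hF.mul (by continuity)).intervalIntegrable _ _)
    · intro u hu
      exact mul_le_mul_of_nonneg_right (hanti hu.2) (by linarith [hu.2])
  have e1 : (∫ u in x..(x + h / 2), F (x + h) * (u - x)) = F (x + h) * (h ^ 2 / 8) := by
    rw [intervalIntegral.integral_const_mul, wint1]
  have e2 : (∫ u in (x + h / 2)..(x + h), F (x + h) * (x + h - u)) = F (x + h) * (h ^ 2 / 8) := by
    rw [intervalIntegral.integral_const_mul, wint2]
  have : (4 / h ^ 2) * (F (x + h) * (h ^ 2 / 8) + F (x + h) * (h ^ 2 / 8)) ≤ tentAvg F h x := by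
    unfold tentAvg
    apply mul_le_mul_of_nonneg_left _ (by positivity)
    exact add_le_add (le_of_eq_of_le e1.symm key1) (le_of_eq_of_le e2.symm key2)
  calc F (x + h) = (4 / h ^ 2) * (F (x + h) * (h ^ 2 / 8) + F (x + h) * (h ^ 2 / 8)) := by
        field_simp; ring
    _ ≤ tentAvg F h x := this

lemma tentAvg_shift_rep (F : ℝ → ℝ) (h x : ℝ) :
    tentAvg F h x = (4 / h ^ 2) * ((∫ s in (0:ℝ)..(h / 2), F (x + s) * s) +
      ∫ s in (h / 2)..h, F (x + s) * (h - s)) := by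
  unfold tentAvg
  congr 1
  have h1 := intervalIntegral.integral_comp_add_left (a := (0:ℝ)) (b := h / 2)
    (f := fun u => F u * (u - x)) x
  have h2 := intervalIntegral.integral_comp_add_left (a := h / 2) (b := h)
    (f := fun u => F u * (x + h - u)) x
  simp only [add_zero] at h1 h2
  rw [← h1, ← h2]
  congr 1
  · apply intervalIntegral.integral_congr
    intro s _
    simp only
    ring_nf
  · apply intervalIntegral.integral_congr
    intro s _
    simp only
    ring_nf

lemma tentAvg_antitone {F : ℝ → ℝ} (hF : Continuous F) (hanti : Antitone F) {h : ℝ}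
    (h0 : 0 < h) : Antitone (tentAvg F h) := by
  intro x y hxy
  rw [tentAvg_shift_rep, tentAvg_shift_rep]
  apply mul_le_mul_of_nonneg_left _ (by positivity)
  have c1 : ∀ z : ℝ, Continuous fun s => F (z + s) * s := fun z =>
    (hF.comp (continuous_const.add continuous_id)).mul continuous_id
  have c2 : ∀ z : ℝ, Continuous fun s => F (z + s) * (h - s) := fun z =>
    (hF.comp (continuous_const.add continuous_id)).mul (by continuity)
  apply add_le_add
  · apply intervalIntegral.integral_mono_on (by linarith) ((c1 y).intervalIntegrable _ _)
      ((c1 x).intervalIntegrable _ _)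
    intro s hs
    exact mul_le_mul_of_nonneg_right (hanti (by linarith)) hs.1
  · apply intervalIntegral.integral_mono_on (by linarith) ((c2 y).intervalIntegrable _ _)
      ((c2 x).intervalIntegrable _ _)
    intro s hs
    exact mul_le_mul_of_nonneg_right (hanti (by linarith)) (by linarith [hs.2])

lemma lin_int (a b d : ℝ) : (∫ u in a..b, (u - d)) = (b ^ 2 - a ^ 2) / 2 - d * (b - a) := by
  rw [intervalIntegral.integral_sub intervalIntegral.intervalIntegrable_id
    (intervalIntegrable_const), integral_id, intervalIntegral.integral_const]
  simp [smul_eq_mul]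
  ring

lemma tent_ident {F : ℝ → ℝ} (hF : Continuous F) {M c : ℝ} (hc : ∀ t, M ≤ t → F t = c)
    {h : ℝ} (h0 : 0 < h) (x : ℝ) :
    (∫ t in Ioi x, (F (t + h) - 2 * F (t + h / 2) + F t) * (t - x)) =
      (h ^ 2 / 4) * (tentAvg F h x - c) := by
  set K := max x M + h with hK
  have hxK : x ≤ K := by
    have := le_max_left x M; simp only [hK]; linarith
  have hxhK : x + h ≤ K := by
    have := le_max_left x M; simp only [hK]; linarith
  have hMK : M ≤ K := by
    have := le_max_right x M; simp only [hK]; linarith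
  set g : ℝ → ℝ := fun t => (F (t + h) - 2 * F (t + h / 2) + F t) * (t - x) with hg
  have hgc : Continuous g := by
    apply Continuous.mul _ (by continuity)
    exact ((hF.comp (continuous_id.add continuous_const)).sub
      (continuous_const.mul (hF.comp (continuous_id.add continuous_const)))).add hF
  have hgz : ∀ t, K ≤ t → g t = 0 := by
    intro t ht
    have e1 : F (t + h) = c := hc _ (by linarith)
    have e2 : F (t + h / 2) = c := hc _ (by linarith)
    have e3 : F t = c := hc _ (by linarith)
    simp only [hg, e1, e2, e3]; ring
  have hsplit : (∫ t in Ioi x, g t) = ∫ t in x..K, g t := by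
    rw [← Set.Ioc_union_Ioi_eq_Ioi hxK, setIntegral_union (Set.Ioc_disjoint_Ioi le_rfl)
      measurableSet_Ioi (hgc.integrableOn_Ioc) ?_, intervalIntegral.integral_of_le hxK]
    · rw [setIntegral_congr_fun measurableSet_Ioi (fun t ht => hgz t (le_of_lt ht))]
      simp
    · apply IntegrableOn.congr_fun (integrableOn_zero) _ measurableSet_Ioi
      exact fun t ht => (hgz t (le_of_lt ht)).symm
  rw [hsplit]
  set G1 : ℝ → ℝ := fun u => F u * (u - x - h) with hG1
  set G2 : ℝ → ℝ := fun u => F u * (u - x - h / 2) with hG2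
  set G3 : ℝ → ℝ := fun u => F u * (u - x) with hG3
  have hG1c : Continuous G1 := hF.mul (by continuity)
  have hG2c : Continuous G2 := hF.mul (by continuity)
  have hG3c : Continuous G3 := hF.mul (by continuity)
  have ii : ∀ (G : ℝ → ℝ), Continuous G → ∀ a b : ℝ, IntervalIntegrable G volume a b :=
    fun G hG a b => hG.intervalIntegrable a b
  have c1 : Continuous fun t : ℝ => G1 (t + h) := hG1c.comp (continuous_id.add continuous_const)
  have c2 : Continuous fun t : ℝ => G2 (t + h / 2) :=
    hG2c.comp (continuous_id.add continuous_const)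
  have e0 : (∫ t in x..K, g t) = (∫ t in x..K, G1 (t + h)) -
      2 * (∫ t in x..K, G2 (t + h / 2)) + ∫ t in x..K, G3 t := by
    have step : (∫ t in x..K, g t) =
        ∫ t in x..K, (G1 (t + h) - 2 * G2 (t + h / 2) + G3 t) := by
      apply intervalIntegral.integral_congr
      intro t _
      simp only [hg, hG1, hG2, hG3]
      ring
    rw [step, intervalIntegral.integral_add ((ii _ c1 _ _).sub ((ii _ c2 _ _).const_mul 2))
      (ii _ hG3c _ _), intervalIntegral.integral_sub (ii _ c1 _ _) ((ii _ c2 _ _).const_mul 2),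
      intervalIntegral.integral_const_mul]
  have e1 : (∫ t in x..K, G1 (t + h)) = ∫ u in (x + h)..(K + h), G1 u :=
    intervalIntegral.integral_comp_add_right G1 h
  have e2 : (∫ t in x..K, G2 (t + h / 2)) = ∫ u in (x + h / 2)..(K + h / 2), G2 u :=
    intervalIntegral.integral_comp_add_right G2 (h / 2)
  have dA : (∫ u in (x + h)..(K + h), G1 u) = (∫ u in (x + h)..K, G1 u) +
      ∫ u in K..(K + h), G1 u :=
    (intervalIntegral.integral_add_adjacent_intervals (ii _ hG1c _ _) (ii _ hG1c _ _)).symm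
  have dB : (∫ u in (x + h / 2)..(K + h / 2), G2 u) = (∫ u in (x + h / 2)..(x + h), G2 u) +
      ((∫ u in (x + h)..K, G2 u) + ∫ u in K..(K + h / 2), G2 u) := by
    rw [intervalIntegral.integral_add_adjacent_intervals (ii _ hG2c _ _) (ii _ hG2c _ _),
      intervalIntegral.integral_add_adjacent_intervals (ii _ hG2c _ _) (ii _ hG2c _ _)]
  have dC : (∫ u in x..K, G3 u) = (∫ u in x..(x + h / 2), G3 u) +
      ((∫ u in (x + h / 2)..(x + h), G3 u) + ∫ u in (x + h)..K, G3 u) := by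
    rw [intervalIntegral.integral_add_adjacent_intervals (ii _ hG3c _ _) (ii _ hG3c _ _),
      intervalIntegral.integral_add_adjacent_intervals (ii _ hG3c _ _) (ii _ hG3c _ _)]
  have hover : (∫ u in (x + h)..K, G1 u) - 2 * (∫ u in (x + h)..K, G2 u) +
      (∫ u in (x + h)..K, G3 u) = 0 := by
    have step : ∀ a b : ℝ, (∫ u in a..b, (G1 u - 2 * G2 u + G3 u)) = 0 := by
      intro a b
      have : ∀ u, G1 u - 2 * G2 u + G3 u = 0 := by
        intro u; simp only [hG1, hG2, hG3]; ring
      simp [this]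
    have := step (x + h) K
    rw [intervalIntegral.integral_add ((ii _ hG1c _ _).sub ((ii _ hG2c _ _).const_mul 2))
      (ii _ hG3c _ _), intervalIntegral.integral_sub (ii _ hG1c _ _)
      ((ii _ hG2c _ _).const_mul 2), intervalIntegral.integral_const_mul] at this
    linarith
  have nK1 : (∫ u in K..(K + h), G1 u) = c * ((((K + h) ^ 2 - K ^ 2) / 2) - (x + h) * h) := by
    have step : (∫ u in K..(K + h), G1 u) = ∫ u in K..(K + h), c * (u - (x + h)) := by
      apply intervalIntegral.integral_congr
      intro u hu
      have hKm : K ⊓ (K + h) = K := min_eq_left (by linarith)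
      have hu1 : K ≤ u := by rw [← hKm]; exact hu.1
      simp only [hG1, hc u (le_trans hMK hu1)]
      ring
    rw [step, intervalIntegral.integral_const_mul, lin_int]
    ring
  have nK2 : (∫ u in K..(K + h / 2), G2 u) =
      c * ((((K + h / 2) ^ 2 - K ^ 2) / 2) - (x + h / 2) * (h / 2)) := by
    have step : (∫ u in K..(K + h / 2), G2 u) = ∫ u in K..(K + h / 2), c * (u - (x + h / 2)) := by
      apply intervalIntegral.integral_congr
      intro u hu
      have hKm : K ⊓ (K + h / 2) = K := min_eq_left (by linarith)
      have hu1 : K ≤ u := by rw [← hKm]; exact hu.1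
      simp only [hG2, hc u (le_trans hMK hu1)]
      ring
    rw [step, intervalIntegral.integral_const_mul, lin_int]
    ring
  have comb : (∫ u in (x + h / 2)..(x + h), G3 u) - 2 * (∫ u in (x + h / 2)..(x + h), G2 u) =
      ∫ u in (x + h / 2)..(x + h), F u * (x + h - u) := by
    rw [← intervalIntegral.integral_const_mul, ← intervalIntegral.integral_sub
      (ii _ hG3c _ _) ((ii _ hG2c _ _).const_mul 2)]
    apply intervalIntegral.integral_congr
    intro u _
    simp only [hG3, hG2]
    ring
  have tA : tentAvg F h x = (4 / h ^ 2) * ((∫ u in x..(x + h / 2), G3 u) +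
      ∫ u in (x + h / 2)..(x + h), F u * (x + h - u)) := rfl
  have hred : (h ^ 2 / 4) * (tentAvg F h x - c) = (∫ u in x..(x + h / 2), G3 u) +
      (∫ u in (x + h / 2)..(x + h), F u * (x + h - u)) - c * h ^ 2 / 4 := by
    rw [tA]
    have hne : (h : ℝ) ^ 2 ≠ 0 := by positivity
    generalize (∫ u in x..(x + h / 2), G3 u) +
      (∫ u in (x + h / 2)..(x + h), F u * (x + h - u)) = S
    field_simp
  rw [e0, e1, e2, dA, dB, dC, hred]
  linear_combination hover + comb + nK1 - 2 * nK2

lemma put_rep {μ : Measure ℝ} [IsFiniteMeasure μ] (hμ : Integrable (fun x => x) μ) (t : ℝ) :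
    ENNReal.ofReal (put μ t) = ∫⁻ x, ENNReal.ofReal (max (t - x) 0) ∂μ := by
  unfold put
  have hint : Integrable (fun x => max (t - x) 0) μ := by
    have := ((integrable_const t).sub hμ).pos_part
    simpa using this
  rw [ofReal_integral_eq_lintegral_ofReal hint
    (Filter.Eventually.of_forall fun x => le_max_right _ _)]

lemma step1 (η χ : Measure ℝ) [IsFiniteMeasure η] [IsFiniteMeasure χ]
    (hη : Integrable (fun x => x) η) (hχ : Integrable (fun x => x) χ)
    (hmass : η Set.univ = χ Set.univ) (hput : ∀ k : ℝ, put η k ≤ put χ k)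
    {F : ℝ → ℝ} (hF : Continuous F) (hFconv : ConvexOn ℝ Set.univ F) (hFanti : Antitone F)
    {M c : ℝ} (hc : ∀ t, M ≤ t → F t = c)
    (hFη : Integrable F η) (hFχ : Integrable F χ)
    (hF1η : Integrable (fun x => F (x + 1)) η) (hF1χ : Integrable (fun x => F (x + 1)) χ)
    {h : ℝ} (h0 : 0 < h) (h1 : h ≤ 1) :
    ∫ x, tentAvg F h x ∂η ≤ ∫ x, tentAvg F h x ∂χ := by
  set w : ℝ → ℝ := fun t => F (t + h) - 2 * F (t + h / 2) + F t with hw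
  have hwc : Continuous w :=
    ((hF.comp (continuous_id.add continuous_const)).sub
      (continuous_const.mul (hF.comp (continuous_id.add continuous_const)))).add hF
  have hw0 : ∀ t, 0 ≤ w t := by
    intro t
    have hmid := hFconv.2 (mem_univ t) (mem_univ (t + h))
      (by norm_num : (0:ℝ) ≤ 1/2) (by norm_num : (0:ℝ) ≤ 1/2) (by norm_num)
    have hpt : (1/2 : ℝ) • t + (1/2 : ℝ) • (t + h) = t + h / 2 := by
      rw [smul_eq_mul, smul_eq_mul]; ring
    rw [hpt] at hmid
    simp only [hw, smul_eq_mul] at *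
    linarith
  -- identity in lintegral form
  have hne : (h:ℝ) ^ 2 ≠ 0 := by positivity
  have ident : ∀ x, tentAvg F h x - c = (4 / h ^ 2) * ∫ t in Ioi x, w t * (t - x) := by
    intro x
    rw [tent_ident hF hc h0 x]
    field_simp
  have int_on : ∀ x : ℝ, IntegrableOn (fun t => w t * (t - x)) (Ioi x) volume := by
    intro x
    have hgc : Continuous fun t => w t * (t - x) := hwc.mul (by continuity)
    have hxK : x ≤ max x M + h := by have := le_max_left x M; linarith
    have hgz : ∀ t, max x M + h ≤ t → w t * (t - x) = 0 := by
      intro t ht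
      have hM := le_max_right x M
      have e1 : F (t + h) = c := hc _ (by linarith)
      have e2 : F (t + h / 2) = c := hc _ (by linarith)
      have e3 : F t = c := hc _ (by linarith)
      simp only [hw, e1, e2, e3]; ring
    rw [← Set.Ioc_union_Ioi_eq_Ioi hxK]
    apply IntegrableOn.union hgc.integrableOn_Ioc
    apply IntegrableOn.congr_fun (integrableOn_zero) _ measurableSet_Ioi
    exact fun t ht => (hgz t (le_of_lt ht)).symm
  have lint_eq : ∀ x, ENNReal.ofReal (tentAvg F h x - c) =
      ENNReal.ofReal (4 / h ^ 2) * ∫⁻ t, ENNReal.ofReal (w t * max (t - x) 0) := by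
    intro x
    have hnnI : (0:ℝ) ≤ ∫ t in Ioi x, w t * (t - x) := by
      apply setIntegral_nonneg measurableSet_Ioi
      intro t ht
      exact mul_nonneg (hw0 t) (by rw [mem_Ioi] at ht; linarith)
    rw [ident x, ENNReal.ofReal_mul (by positivity)]
    congr 1
    rw [ofReal_integral_eq_lintegral_ofReal (int_on x)
      ((ae_restrict_iff' measurableSet_Ioi).2 (Filter.Eventually.of_forall fun t ht =>
        mul_nonneg (hw0 t) (by rw [mem_Ioi] at ht; linarith)))]
    rw [← lintegral_add_compl (fun t => ENNReal.ofReal (w t * max (t - x) 0))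
      (measurableSet_Ioi (a := x))]
    have z2 : ∫⁻ t in (Ioi x)ᶜ, ENNReal.ofReal (w t * max (t - x) 0) = 0 := by
      rw [compl_Ioi]
      have hz : ∀ t, t ∈ Iic x → ENNReal.ofReal (w t * max (t - x) 0) = (0:ENNReal) := by
        intro t ht
        rw [mem_Iic] at ht
        have hm : max (t - x) 0 = 0 := max_eq_right (by linarith)
        simp [hm]
      calc (∫⁻ t in Iic x, ENNReal.ofReal (w t * max (t - x) 0))
          = ∫⁻ _ in Iic x, (0:ENNReal) :=
            setLIntegral_congr_fun measurableSet_Iic (fun t ht => hz t ht)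
        _ = 0 := by simp
    rw [z2, add_zero]
    apply setLIntegral_congr_fun measurableSet_Ioi
    intro t ht
    rw [mem_Ioi] at ht
    have hm : max (t - x) 0 = t - x := max_eq_left (by linarith)
    simp only [hm]
  -- swap
  have hkmeas : Measurable fun p : ℝ × ℝ => ENNReal.ofReal (w p.2 * max (p.2 - p.1) 0) := by
    apply ENNReal.measurable_ofReal.comp
    apply Measurable.mul (hwc.measurable.comp measurable_snd)
    exact ((measurable_snd.sub measurable_fst).max measurable_const)
  have key : ∀ (μ : Measure ℝ) [IsFiniteMeasure μ], Integrable (fun x => x) μ →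
      (∫⁻ x, ENNReal.ofReal (tentAvg F h x - c) ∂μ) =
        ENNReal.ofReal (4 / h ^ 2) *
          ∫⁻ t, ENNReal.ofReal (w t) * ENNReal.ofReal (put μ t) := by
    intro μ _ hμ
    calc (∫⁻ x, ENNReal.ofReal (tentAvg F h x - c) ∂μ)
        = ∫⁻ x, (ENNReal.ofReal (4 / h ^ 2) *
            ∫⁻ t, ENNReal.ofReal (w t * max (t - x) 0)) ∂μ := by
          exact lintegral_congr fun x => lint_eq x
      _ = ENNReal.ofReal (4 / h ^ 2) *
            ∫⁻ x, (∫⁻ t, ENNReal.ofReal (w t * max (t - x) 0)) ∂μ := by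
          exact lintegral_const_mul' _ _ ENNReal.ofReal_ne_top
      _ = ENNReal.ofReal (4 / h ^ 2) *
            ∫⁻ t, (∫⁻ x, ENNReal.ofReal (w t * max (t - x) 0) ∂μ) := by
          congr 1
          exact lintegral_lintegral_swap (hkmeas.aemeasurable)
      _ = ENNReal.ofReal (4 / h ^ 2) *
            ∫⁻ t, ENNReal.ofReal (w t) * ENNReal.ofReal (put μ t) := by
          congr 1
          apply lintegral_congr fun t => ?_
          rw [put_rep hμ t]
          rw [← lintegral_const_mul' _ _ ENNReal.ofReal_ne_top]
          apply lintegral_congr fun x => ?_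
          rw [← ENNReal.ofReal_mul (hw0 t)]
  -- bounds and integrability of tentAvg
  have hbub : ∀ x, F (x + 1) ≤ tentAvg F h x ∧ tentAvg F h x ≤ F x := fun x =>
    ⟨le_trans (hFanti (by linarith)) (le_tentAvg hF hFanti h0 x), tentAvg_le hF hFanti h0 x⟩
  have hφmeas : Measurable (tentAvg F h) := (tentAvg_antitone hF hFanti h0).measurable
  have hφint : ∀ (μ : Measure ℝ) [IsFiniteMeasure μ], Integrable F μ →
      Integrable (fun x => F (x + 1)) μ → Integrable (tentAvg F h) μ := by
    intro μ _ hFμ hF1μ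
    apply Integrable.mono' (hFμ.abs.add hF1μ.abs) hφmeas.aestronglyMeasurable
    apply Filter.Eventually.of_forall fun x => ?_
    simp only [Real.norm_eq_abs, Pi.add_apply]
    rw [abs_le]
    obtain ⟨hl, hu⟩ := hbub x
    constructor
    · have := neg_abs_le (F (x + 1)); have := abs_nonneg (F x); linarith
    · have := le_abs_self (F x); have := abs_nonneg (F (x + 1)); linarith
  have hnn : ∀ x, 0 ≤ tentAvg F h x - c := by
    intro x
    have h1' : F (x + h) ≤ tentAvg F h x := le_tentAvg hF hFanti h0 x
    have h2' : c ≤ F (x + h) := by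
      rcases le_total M (x + h) with hM | hM
      · exact (hc _ hM).ge
      · rw [← hc M le_rfl]; exact hFanti hM
    linarith
  -- main inequality
  have hint_η := hφint η hFη hF1η
  have hint_χ := hφint χ hFχ hF1χ
  have lineq : (∫⁻ x, ENNReal.ofReal (tentAvg F h x - c) ∂η) ≤
      ∫⁻ x, ENNReal.ofReal (tentAvg F h x - c) ∂χ := by
    rw [key η hη, key χ hχ]
    apply mul_le_mul_right ?_ _
    apply lintegral_mono fun t => ?_
    exact mul_le_mul_right (ENNReal.ofReal_le_ofReal (hput t)) _
  have realineq : (∫ x, (tentAvg F h x - c) ∂η) ≤ ∫ x, (tentAvg F h x - c) ∂χ := by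
    have hiη : Integrable (fun x => tentAvg F h x - c) η := by
      exact hint_η.sub (integrable_const c)
    have hiχ : Integrable (fun x => tentAvg F h x - c) χ := by
      exact hint_χ.sub (integrable_const c)
    have e_η := ofReal_integral_eq_lintegral_ofReal hiη (Filter.Eventually.of_forall hnn)
    have e_χ := ofReal_integral_eq_lintegral_ofReal hiχ (Filter.Eventually.of_forall hnn)
    rw [← ENNReal.ofReal_le_ofReal_iff (integral_nonneg hnn)]
    rw [e_η, e_χ]
    exact lineq
  have mass_eq : (η Set.univ).toReal = (χ Set.univ).toReal := by rw [hmass]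
  have expand : ∀ (μ : Measure ℝ) [IsFiniteMeasure μ], Integrable (tentAvg F h) μ →
      (∫ x, (tentAvg F h x - c) ∂μ) = (∫ x, tentAvg F h x ∂μ) - c * (μ Set.univ).toReal := by
    intro μ _ hμint
    rw [integral_sub hμint (integrable_const c), MeasureTheory.integral_const, smul_eq_mul]
    rw [measureReal_def]
    ring
  rw [expand η hint_η, expand χ hint_χ, mass_eq] at realineq
  linarith

lemma step2 (η χ : Measure ℝ) [IsFiniteMeasure η] [IsFiniteMeasure χ]
    (hη : Integrable (fun x => x) η) (hχ : Integrable (fun x => x) χ)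
    (hmass : η Set.univ = χ Set.univ) (hput : ∀ k : ℝ, put η k ≤ put χ k)
    {F : ℝ → ℝ} (hF : Continuous F) (hFconv : ConvexOn ℝ Set.univ F) (hFanti : Antitone F)
    {M c : ℝ} (hc : ∀ t, M ≤ t → F t = c)
    (hFη : Integrable F η) (hFχ : Integrable F χ)
    (hF1η : Integrable (fun x => F (x + 1)) η) (hF1χ : Integrable (fun x => F (x + 1)) χ) :
    ∫ x, F x ∂η ≤ ∫ x, F x ∂χ := by
  set hn : ℕ → ℝ := fun n => 1 / ((n : ℝ) + 1) with hhn
  have h0n : ∀ n, 0 < hn n := fun n => by positivity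
  have h1n : ∀ n, hn n ≤ 1 := by
    intro n
    rw [hhn]
    rw [div_le_one (by positivity)]
    simp
  have hbub : ∀ n x, F (x + 1) ≤ tentAvg F (hn n) x ∧ tentAvg F (hn n) x ≤ F x := fun n x =>
    ⟨le_trans (hFanti (by linarith [h1n n])) (le_tentAvg hF hFanti (h0n n) x),
      tentAvg_le hF hFanti (h0n n) x⟩
  have hDC : ∀ (μ : Measure ℝ) [IsFiniteMeasure μ], Integrable F μ →
      Integrable (fun x => F (x + 1)) μ →
      Filter.Tendsto (fun n => ∫ x, tentAvg F (hn n) x ∂μ) Filter.atTop (nhds (∫ x, F x ∂μ)) := by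
    intro μ _ hFμ hF1μ
    apply tendsto_integral_of_dominated_convergence (fun x => |F x| + |F (x + 1)|)
    · exact fun n => ((tentAvg_antitone hF hFanti (h0n n)).measurable).aestronglyMeasurable
    · exact hFμ.abs.add hF1μ.abs
    · intro n
      apply Filter.Eventually.of_forall fun x => ?_
      obtain ⟨hl, hu⟩ := hbub n x
      simp only [Real.norm_eq_abs]
      rw [abs_le]
      constructor
      · have := neg_abs_le (F (x + 1)); have := abs_nonneg (F x); linarith
      · have := le_abs_self (F x); have := abs_nonneg (F (x + 1)); linarith
    · apply Filter.Eventually.of_forall fun x => ?_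
      have hlow : Filter.Tendsto (fun n => F (x + hn n)) Filter.atTop (nhds (F x)) := by
        have harg : Filter.Tendsto (fun n => x + hn n) Filter.atTop (nhds x) := by
          have := tendsto_one_div_add_atTop_nhds_zero_nat (𝕜 := ℝ)
          have := Filter.Tendsto.const_add x this
          simpa [hhn, one_div] using this
        exact (hF.continuousAt.tendsto).comp harg
      apply tendsto_of_tendsto_of_tendsto_of_le_of_le hlow tendsto_const_nhds
        (fun n => le_tentAvg hF hFanti (h0n n) x) (fun n => (hbub n x).2)
  exact le_of_tendsto_of_tendsto' (hDC η hFη hF1η) (hDC χ hFχ hF1χ)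
    (fun n => step1 η χ hη hχ hmass hput hF hFconv hFanti hc hFη hFχ hF1η hF1χ (h0n n) (h1n n))

/-- Convex-decreasing order: `∫ f dη ≤ ∫ f dχ` for all convex non-increasing `f`
for which both integrals exist. -/
def le_cd (η χ : Measure ℝ) : Prop :=
  ∀ f : ℝ → ℝ, ConvexOn ℝ Set.univ f → Antitone f →
    Integrable f η → Integrable f χ → ∫ x, f x ∂η ≤ ∫ x, f x ∂χ

theorem le_cd_iff_put_le (η χ : Measure ℝ) [IsFiniteMeasure η] [IsFiniteMeasure χ]
    (hη : Integrable (fun x => x) η) (hχ : Integrable (fun x => x) χ)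
    (hmass : η Set.univ = χ Set.univ) :
    le_cd η χ ↔ ∀ k : ℝ, put η k ≤ put χ k := by
  constructor
  · intro hcd k
    have hconv : ConvexOn ℝ Set.univ (fun x => max (k - x) 0) := by
      have h1 : ConvexOn ℝ Set.univ (fun x : ℝ => k - x) := by
        refine ⟨convex_univ, ?_⟩
        intro x _ y _ a b ha hb hab
        simp only [smul_eq_mul]
        apply le_of_eq
        linear_combination (-k) * hab
      have h2 := h1.sup (convexOn_const (0:ℝ) convex_univ)
      exact h2
    have hanti : Antitone (fun x : ℝ => max (k - x) 0) := fun x y hxy =>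
      max_le_max (by linarith) le_rfl
    have hiη : Integrable (fun x => max (k - x) 0) η := by
      simpa using ((integrable_const k).sub hη).pos_part
    have hiχ : Integrable (fun x => max (k - x) 0) χ := by
      simpa using ((integrable_const k).sub hχ).pos_part
    exact hcd _ hconv hanti hiη hiχ
  · intro hput f hconv hanti hfη hfχ
    have hcont : Continuous f := by
      rw [← continuousOn_univ]
      exact hconv.continuousOn isOpen_univ
    have hsη : Integrable (fun x => f (x + 1)) η := integrable_shift_one hconv hanti hcont hfη
    have hsχ : Integrable (fun x => f (x + 1)) χ := integrable_shift_one hconv hanti hcont hfχ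
    -- truncations
    have key : ∀ n : ℕ, (∫ x, max (f x) (f n) ∂η) ≤ ∫ x, max (f x) (f n) ∂χ := by
      intro n
      have hFcont : Continuous fun x => max (f x) (f n) := hcont.max continuous_const
      have hFconv : ConvexOn ℝ Set.univ fun x => max (f x) (f n) :=
        hconv.sup (convexOn_const _ convex_univ)
      have hFanti : Antitone fun x => max (f x) (f n) := fun x y hxy =>
        max_le_max (hanti hxy) le_rfl
      have hFc : ∀ t, (n : ℝ) ≤ t → max (f t) (f n) = f n := fun t ht =>
        max_eq_right (hanti ht)
      have hFη : Integrable (fun x => max (f x) (f n)) η := by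
        exact hfη.sup (integrable_const (f n))
      have hFχ : Integrable (fun x => max (f x) (f n)) χ := by
        exact hfχ.sup (integrable_const (f n))
      have hF1η : Integrable (fun x => max (f (x + 1)) (f n)) η := by
        exact hsη.sup (integrable_const (f n))
      have hF1χ : Integrable (fun x => max (f (x + 1)) (f n)) χ := by
        exact hsχ.sup (integrable_const (f n))
      exact step2 η χ hη hχ hmass hput hFcont hFconv hFanti hFc hFη hFχ hF1η hF1χ
    -- limit in n
    have hDC : ∀ (μ : Measure ℝ) [IsFiniteMeasure μ], Integrable f μ →
        Filter.Tendsto (fun n : ℕ => ∫ x, max (f x) (f n) ∂μ) Filter.atTop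
          (nhds (∫ x, f x ∂μ)) := by
      intro μ _ hfμ
      apply tendsto_integral_of_dominated_convergence (fun x => |f x| + |f 0|)
      · exact fun n => (hcont.max continuous_const).aestronglyMeasurable
      · exact hfμ.abs.add (integrable_const _)
      · intro n
        apply Filter.Eventually.of_forall fun x => ?_
        simp only [Real.norm_eq_abs]
        rw [abs_le]
        have hn0 : f (n : ℝ) ≤ f 0 := hanti (Nat.cast_nonneg n)
        constructor
        · have h1 : -|f x| ≤ f x := neg_abs_le _
          have h2 : f x ≤ max (f x) (f n) := le_max_left _ _
          have := abs_nonneg (f 0)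
          linarith
        · have h1 : max (f x) (f n) ≤ max (f x) (f 0) := max_le_max le_rfl hn0
          have h2 : max (f x) (f 0) ≤ |f x| + |f 0| := by
            apply max_le
            · have := le_abs_self (f x); have := abs_nonneg (f 0); linarith
            · have := le_abs_self (f 0); have := abs_nonneg (f x); linarith
          linarith
      · apply Filter.Eventually.of_forall fun x => ?_
        have hev : ∀ᶠ n : ℕ in Filter.atTop, max (f x) (f n) = f x := by
          rw [Filter.eventually_atTop]
          refine ⟨⌈x⌉₊, fun n hn => max_eq_left (hanti (le_trans (Nat.le_ceil x)
            (Nat.cast_le.2 hn)))⟩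
        exact Filter.Tendsto.congr' (Filter.EventuallyEq.symm hev) tendsto_const_nhds
    exact le_of_tendsto_of_tendsto' (hDC η hfη) (hDC χ hfχ) key
end

section
/- Let η, χ be finite positive measures on ℝ with finite first moments and equal total mass. If η ≤_pcd χ (i.e., ∫ f dη ≤ ∫ f dχ for all non-negative, convex, non-increasing f), then in fact η ≤_cd χ (the inequality holds for all convex non-increasing f). -/
open MeasureTheory Set

/-- Positive convex-decreasing order: test against non-negative convex non-increasing
functions. -/
def le_pcd (η χ : Measure ℝ) : Prop :=
  ∀ f : ℝ → ℝ, (∀ x, 0 ≤ f x) → ConvexOn ℝ Set.univ f → Antitone f →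
    Integrable f η → Integrable f χ → ∫ x, f x ∂η ≤ ∫ x, f x ∂χ

theorem le_pcd_of_eq_mass_imp_le_cd (η χ : Measure ℝ) [IsFiniteMeasure η] [IsFiniteMeasure χ]
    (hη : Integrable (fun x => x) η) (hχ : Integrable (fun x => x) χ)
    (hmass : η Set.univ = χ Set.univ) (h : le_pcd η χ) :
    le_cd η χ := by
  intro f hconv hanti hfη hfχ
  have key : ∀ n : ℕ, ∫ x, max (f x) (-(n : ℝ)) ∂η ≤ ∫ x, max (f x) (-(n : ℝ)) ∂χ := by
    intro n
    have hmaxconv : ConvexOn ℝ Set.univ (fun x => max (f x) (-(n : ℝ))) :=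
      hconv.sup (convexOn_const _ convex_univ)
    have hgconv : ConvexOn ℝ Set.univ (fun x => max (f x) (-(n : ℝ)) + n) :=
      hmaxconv.add (convexOn_const _ convex_univ)
    have hganti : Antitone (fun x => max (f x) (-(n : ℝ)) + n) := fun a b hab =>
      add_le_add (max_le_max (hanti hab) le_rfl) le_rfl
    have hg0 : ∀ x, 0 ≤ max (f x) (-(n : ℝ)) + n := fun x => by
      have := le_max_right (f x) (-(n : ℝ)); linarith
    have hiη : Integrable (fun x => max (f x) (-(n : ℝ))) η := hfη.sup (integrable_const _)
    have hiχ : Integrable (fun x => max (f x) (-(n : ℝ))) χ := hfχ.sup (integrable_const _)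
    have := h (fun x => max (f x) (-(n : ℝ)) + n) hg0 hgconv hganti
      (hiη.add (integrable_const _)) (hiχ.add (integrable_const _))
    rw [integral_add hiη (integrable_const _), integral_add hiχ (integrable_const _),
      integral_const, integral_const, Measure.real, Measure.real, hmass] at this
    linarith
  have hbound : ∀ μ : Measure ℝ, ∀ _ : Integrable f μ,
      ∀ (n : ℕ), ∀ᵐ x ∂μ, ‖max (f x) (-(n : ℝ))‖ ≤ |f x| := by
    intro μ _ n
    filter_upwards with x
    rw [Real.norm_eq_abs]
    rcases le_total (f x) (-(n : ℝ)) with hc | hc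
    · rw [max_eq_right hc, abs_of_nonpos (neg_nonpos.mpr (Nat.cast_nonneg n))]
      have : -(n : ℝ) ≤ |f x| := by
        have := neg_abs_le (f x); linarith
      linarith [abs_nonneg (f x), neg_le_abs (f x), hc, abs_of_nonpos (le_trans hc (neg_nonpos.mpr (Nat.cast_nonneg n)))]
    · rw [max_eq_left hc]
  have hptw : ∀ᵐ x ∂(η : Measure ℝ), Filter.Tendsto (fun n : ℕ => max (f x) (-(n : ℝ)))
      Filter.atTop (nhds (f x)) := by
    filter_upwards with x
    apply Filter.Tendsto.congr' _ tendsto_const_nhds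
    filter_upwards [Filter.eventually_ge_atTop (Nat.ceil |f x|)] with n hn
    have : -(n : ℝ) ≤ f x := by
      have h1 : |f x| ≤ (n : ℝ) := le_trans (Nat.le_ceil _) (by exact_mod_cast hn)
      have := neg_abs_le (f x); linarith
    exact (max_eq_left this).symm
  have hptwχ : ∀ᵐ x ∂(χ : Measure ℝ), Filter.Tendsto (fun n : ℕ => max (f x) (-(n : ℝ)))
      Filter.atTop (nhds (f x)) := by
    filter_upwards with x
    apply Filter.Tendsto.congr' _ tendsto_const_nhds
    filter_upwards [Filter.eventually_ge_atTop (Nat.ceil |f x|)] with n hn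
    have : -(n : ℝ) ≤ f x := by
      have h1 : |f x| ≤ (n : ℝ) := le_trans (Nat.le_ceil _) (by exact_mod_cast hn)
      have := neg_abs_le (f x); linarith
    exact (max_eq_left this).symm
  have hηlim : Filter.Tendsto (fun n : ℕ => ∫ x, max (f x) (-(n : ℝ)) ∂η)
      Filter.atTop (nhds (∫ x, f x ∂η)) :=
    tendsto_integral_of_dominated_convergence (fun x => |f x|)
      (fun n => (hfη.aestronglyMeasurable.sup aestronglyMeasurable_const))
      hfη.abs (hbound η hfη) hptw
  have hχlim : Filter.Tendsto (fun n : ℕ => ∫ x, max (f x) (-(n : ℝ)) ∂χ)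
      Filter.atTop (nhds (∫ x, f x ∂χ)) :=
    tendsto_integral_of_dominated_convergence (fun x => |f x|)
      (fun n => (hfχ.aestronglyMeasurable.sup aestronglyMeasurable_const))
      hfχ.abs (hbound χ hfχ) hptwχ
  exact le_of_tendsto_of_tendsto' hηlim hχlim key
end

section
/- For finite positive measures η, χ with finite first moments satisfying η ≤_pcd χ, the constant c_{η,χ} := sup_{k∈ℝ} (C_η(k) - C_χ(k)) equals 0 if and only if η ≤_pc χ, where ≤_pc is the positive convex order (testing against non-negative convex functions). -/
open MeasureTheory Set

noncomputable def call (η : Measure ℝ) (k : ℝ) : ℝ := ∫ x, max (x - k) 0 ∂η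

/-- Positive convex order: test against non-negative convex functions. -/
def le_pc (η χ : Measure ℝ) : Prop :=
  ∀ f : ℝ → ℝ, (∀ x, 0 ≤ f x) → ConvexOn ℝ Set.univ f →
    Integrable f η → Integrable f χ → ∫ x, f x ∂η ≤ ∫ x, f x ∂χ

set_option linter.unusedSectionVars false


lemma call_nonneg (μ : Measure ℝ) (k : ℝ) : 0 ≤ call μ k :=
  integral_nonneg fun x => le_max_right _ _

lemma integrable_call (μ : Measure ℝ) [IsFiniteMeasure μ]
    (hμ : Integrable (fun x => x) μ) (k : ℝ) :
    Integrable (fun x => max (x - k) 0) μ := by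
  have hb : Integrable (fun x : ℝ => |x| + |k|) μ := hμ.abs.add (integrable_const _)
  refine hb.mono' ?_ ?_
  · exact ((continuous_id.sub continuous_const).max continuous_const).aestronglyMeasurable
  · filter_upwards with x
    rw [Real.norm_eq_abs, abs_of_nonneg (le_max_right _ _)]
    rcases le_total (x - k) 0 with h | h
    · simp [max_eq_right h]; positivity
    · rw [max_eq_left h]
      calc x - k ≤ |x| + |k| := by
            have := abs_nonneg x; have := neg_abs_le x; have := le_abs_self x
            have := neg_abs_le k; linarith


-- slope helper (already tested)
lemma slope_le_slope {f : ℝ → ℝ} (hf : ConvexOn ℝ univ f) {a b c d : ℝ}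
    (hab : a < b) (hcd : c < d) (hac : a ≤ c) (hbd : b ≤ d) :
    (f b - f a) / (b - a) ≤ (f d - f c) / (d - c) := by
  have h1 : (f b - f a) / (b - a) ≤ (f d - f a) / (d - a) :=
    hf.secant_mono (mem_univ a) (mem_univ b) (mem_univ d) hab.ne' (hab.trans_le hbd).ne' hbd
  have h2 : (f a - f d) / (a - d) ≤ (f c - f d) / (c - d) :=
    hf.secant_mono (mem_univ d) (mem_univ a) (mem_univ c) (hab.trans_le hbd).ne hcd.ne hac
  have e1 : (f a - f d) / (a - d) = (f d - f a) / (d - a) := by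
    rw [← neg_div_neg_eq]; ring_nf
  have e2 : (f c - f d) / (c - d) = (f d - f c) / (d - c) := by
    rw [← neg_div_neg_eq]; ring_nf
  rw [e1, e2] at h2
  linarith

lemma slope_le_slope' {f : ℝ → ℝ} (hf : ConvexOn ℝ univ f) {a b c d : ℝ}
    (hab : a < b) (hcd : c < d) (hac : a ≤ c) (hbd : b ≤ d) :
    (f b - f a) * (d - c) ≤ (f d - f c) * (b - a) := by
  have h := slope_le_slope hf hab hcd hac hbd
  rw [div_le_div_iff₀ (by linarith) (by linarith)] at h
  exact h

noncomputable def grid (n : ℕ) (i : ℕ) : ℝ := -(n : ℝ) + i / n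

noncomputable def sig (f : ℝ → ℝ) (n : ℕ) : ℕ → ℝ :=
  fun i => if i = 0 then 0 else (n : ℝ) * (f (grid n i) - f (grid n (i - 1)))

noncomputable def TT (f : ℝ → ℝ) (n : ℕ) (x : ℝ) : ℝ :=
  ∑ i ∈ Finset.range (2 * n ^ 2), (sig f n (i + 1) - sig f n i) * max (x - grid n (i + 1)) 0

section gridfacts
variable {n : ℕ} (hn : 1 ≤ n)
include hn

lemma grid_succ_sub (i : ℕ) : grid n (i + 1) - grid n i = 1 / n := by
  have : (n : ℝ) ≠ 0 := Nat.cast_ne_zero.mpr (by omega)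
  simp only [grid]
  push_cast
  field_simp
  ring

lemma grid_lt (i : ℕ) : grid n i < grid n (i + 1) := by
  have h := grid_succ_sub hn (n := n) i
  have : (0:ℝ) < 1 / n := by positivity
  linarith

lemma sig_succ (f : ℝ → ℝ) (i : ℕ) :
    sig f n (i + 1) = (n : ℝ) * (f (grid n (i + 1)) - f (grid n i)) := by
  simp [sig]

lemma sig_nonneg (f : ℝ → ℝ) (hmono : Monotone f) (i : ℕ) : 0 ≤ sig f n i := by
  cases i with
  | zero => simp [sig]
  | succ j =>
    rw [sig_succ hn]
    have h1 := hmono (grid_lt hn (n := n) j).le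
    have hn0 : (0:ℝ) ≤ n := Nat.cast_nonneg n
    have : (0:ℝ) ≤ f (grid n (j+1)) - f (grid n j) := by linarith
    positivity

lemma sig_mono (f : ℝ → ℝ) (hconv : ConvexOn ℝ univ f) (hmono : Monotone f) (i : ℕ) :
    sig f n i ≤ sig f n (i + 1) := by
  cases i with
  | zero =>
    simpa [sig] using sig_nonneg hn f hmono 1
  | succ j =>
    rw [sig_succ hn, sig_succ hn]
    have h := slope_le_slope' hconv (grid_lt hn (n := n) j) (grid_lt hn (n := n) (j + 1))
      (grid_lt hn (n := n) j).le (grid_lt hn (n := n) (j + 1)).le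
    rw [grid_succ_sub hn, grid_succ_sub hn] at h
    have h2 : f (grid n (j + 1)) - f (grid n j) ≤ f (grid n (j + 2)) - f (grid n (j + 1)) := by
      have hpos : (0:ℝ) < 1 / n := by positivity
      exact le_of_mul_le_mul_right (by linarith) hpos
    have hn0 : (0:ℝ) ≤ n := Nat.cast_nonneg n
    nlinarith

end gridfacts

lemma abel_sum (σ u : ℕ → ℝ) (h0 : σ 0 = 0) (N : ℕ) :
    ∑ i ∈ Finset.range N, (σ (i + 1) - σ i) * u (i + 1) =
      σ N * u N + ∑ i ∈ Finset.range (N - 1), σ (i + 1) * (u (i + 1) - u (i + 2)) := by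
  induction N with
  | zero => simp [h0]
  | succ N ih =>
    rw [Finset.sum_range_succ, ih]
    cases N with
    | zero => simp [h0]
    | succ M =>
      have e1 : M + 1 + 1 - 1 = M + 1 := rfl
      have e2 : M + 1 - 1 = M := rfl
      rw [e1, Finset.sum_range_succ, e2]
      ring
section terms
variable {f : ℝ → ℝ} {n : ℕ} (hn : 1 ≤ n) (hconv : ConvexOn ℝ univ f)
include hn hconv

lemma upper_term (i : ℕ) (x : ℝ) :
    sig f n (i + 1) * (max (x - grid n (i + 1)) 0 - max (x - grid n (i + 2)) 0) ≤
      f (min x (grid n (i + 2))) - f (min x (grid n (i + 1))) := by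
  set a := grid n i with ha
  set b := grid n (i + 1) with hb
  set c := grid n (i + 2) with hc
  have hab : a < b := grid_lt hn i
  have hbc : b < c := grid_lt hn (i + 1)
  have hw : b - a = 1 / n := grid_succ_sub hn i
  have hnpos : (0:ℝ) < n := by exact_mod_cast hn
  rcases le_total x b with hxb | hbx
  · have h1 : max (x - b) 0 = 0 := max_eq_right (by linarith)
    have h2 : max (x - c) 0 = 0 := max_eq_right (by linarith)
    have h3 : min x c = x := min_eq_left (by linarith)
    have h4 : min x b = x := min_eq_left hxb
    rw [h1, h2, h3, h4]
    simp
  · set y := min x c with hy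
    have hby : b ≤ y := le_min hbx hbc.le
    have h4 : min x b = b := min_eq_right hbx
    have hdiff : max (x - b) 0 - max (x - c) 0 = y - b := by
      rcases le_total x c with h | h
      · rw [max_eq_left (by linarith), max_eq_right (by linarith)]
        rw [hy, min_eq_left h]
        ring
      · rw [max_eq_left (by linarith), max_eq_left (by linarith)]
        rw [hy, min_eq_right h]
        ring
    rw [hdiff, h4]
    rcases eq_or_lt_of_le hby with he | hlt
    · rw [← he]; simp
    · have hk := slope_le_slope' hconv hab hlt hab.le hby
      rw [sig_succ hn]
      calc (n:ℝ) * (f b - f a) * (y - b) = (n:ℝ) * ((f b - f a) * (y - b)) := by ring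
        _ ≤ (n:ℝ) * ((f y - f b) * (b - a)) := by
            exact mul_le_mul_of_nonneg_left hk hnpos.le
        _ = f y - f b := by rw [hw]; field_simp

lemma lower_term (i : ℕ) (x : ℝ) :
    f (min (x - 1 / n) (grid n (i + 1))) - f (min (x - 1 / n) (grid n i)) ≤
      sig f n (i + 1) * (max (x - grid n (i + 1)) 0 - max (x - grid n (i + 2)) 0) := by
  set a := grid n i with ha
  set b := grid n (i + 1) with hb
  set c := grid n (i + 2) with hc
  set y := x - 1 / n with hydef
  have hab : a < b := grid_lt hn i
  have hbc : b < c := grid_lt hn (i + 1)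
  have hw : b - a = 1 / n := grid_succ_sub hn i
  have hw2 : c - b = 1 / n := grid_succ_sub hn (i + 1)
  have hnpos : (0:ℝ) < n := by exact_mod_cast hn
  have hya : y - a = x - b := by rw [hydef]; linarith
  have hyb : y - b = x - c := by rw [hydef]; linarith
  rcases le_total x b with hxb | hbx
  · have h1 : max (x - b) 0 = 0 := max_eq_right (by linarith)
    have h2 : max (x - c) 0 = 0 := max_eq_right (by linarith)
    have h3 : min y b = y := min_eq_left (by linarith)
    have h4 : min y a = y := min_eq_left (by linarith)
    rw [h1, h2, h3, h4]
    simp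
  · rw [sig_succ hn, ← hb, ← ha]
    rcases le_total x c with hxc | hcx
    · -- b ≤ x ≤ c, so a ≤ y ≤ b
      have h1 : max (x - b) 0 = x - b := max_eq_left (by linarith)
      have h2 : max (x - c) 0 = 0 := max_eq_right (by linarith)
      have h3 : min y b = y := min_eq_left (by linarith)
      have h4 : min y a = a := min_eq_right (by linarith)
      rw [h1, h2, h3, h4]
      rcases eq_or_lt_of_le (show a ≤ y by linarith) with he | hay
      · have hxb0 : x - b = 0 := by linarith
        rw [← he, hxb0]
        simp
      · -- slope(a,y) ≤ slope(a,b): (f y - f a) * (b - a) ≤ (f b - f a) * (y - a)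
        have hk := slope_le_slope' hconv hay (show a < b from hab) le_rfl (by linarith)
        rw [hw] at hk
        have h6 := mul_le_mul_of_nonneg_left hk hnpos.le
        have e : (n:ℝ) * ((f y - f a) * (1 / n)) = f y - f a := by field_simp
        have e2 : x - b - 0 = y - a := by linarith
        rw [e2]
        calc f y - f a = (n:ℝ) * ((f y - f a) * (1 / n)) := e.symm
          _ ≤ (n:ℝ) * ((f b - f a) * (y - a)) := h6
          _ = (n:ℝ) * (f b - f a) * (y - a) := by ring
    · -- x ≥ c, so y ≥ b
      have h1 : max (x - b) 0 = x - b := max_eq_left (by linarith)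
      have h2 : max (x - c) 0 = x - c := max_eq_left (by linarith)
      have h3 : min y b = b := min_eq_right (by linarith)
      have h4 : min y a = a := min_eq_right (by linarith)
      rw [h1, h2, h3, h4]
      have : x - b - (x - c) = c - b := by ring
      rw [this, hw2]
      have : (n:ℝ) * (f b - f a) * (1 / n) = f b - f a := by field_simp
      rw [this]
end terms
section TTbounds
variable {f : ℝ → ℝ} {n : ℕ} (hn : 1 ≤ n) (hconv : ConvexOn ℝ univ f)
  (hmono : Monotone f) (hf0 : ∀ x, 0 ≤ f x)

lemma sig_zero (f : ℝ → ℝ) (n : ℕ) : sig f n 0 = 0 := by simp [sig]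

include hn hconv hmono hf0 in
lemma TT_le (x : ℝ) : TT f n x ≤ f x := by
  have hN : 1 ≤ 2 * n ^ 2 := by nlinarith
  set N := 2 * n ^ 2 with hNdef
  set u : ℕ → ℝ := fun j => max (x - grid n j) 0 with hu
  have habel : TT f n x = sig f n N * u N +
      ∑ i ∈ Finset.range (N - 1), sig f n (i + 1) * (u (i + 1) - u (i + 2)) :=
    abel_sum (sig f n) u (sig_zero f n) N
  rw [habel]
  have hsum : ∑ i ∈ Finset.range (N - 1), sig f n (i + 1) * (u (i + 1) - u (i + 2)) ≤
      ∑ i ∈ Finset.range (N - 1),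
        (f (min x (grid n (i + 2))) - f (min x (grid n (i + 1)))) :=
    Finset.sum_le_sum fun i _ => upper_term hn hconv i x
  have htel : ∑ i ∈ Finset.range (N - 1),
      (f (min x (grid n (i + 2))) - f (min x (grid n (i + 1)))) =
      f (min x (grid n (N - 1 + 1))) - f (min x (grid n 1)) := by
    exact Finset.sum_range_sub (fun i => f (min x (grid n (i + 1)))) (N - 1)
  have hN1 : N - 1 + 1 = N := Nat.succ_pred_eq_of_pos (lt_of_lt_of_le Nat.zero_lt_one hN)
  rw [hN1] at htel
  -- last term bound
  obtain ⟨M, hM⟩ : ∃ M, N = M + 1 := ⟨N - 1, by omega⟩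
  have hlast : sig f n N * u N ≤ f (max x (grid n N)) - f (grid n N) := by
    rcases le_total x (grid n N) with hxg | hgx
    · have h1 : u N = 0 := max_eq_right (by simp [hu]; linarith)
      rw [h1, max_eq_right hxg]
      simp
    · have h1 : u N = x - grid n N := by
        rw [hu]; exact max_eq_left (by linarith)
      rw [h1, max_eq_left hgx]
      rcases eq_or_lt_of_le hgx with he | hlt
      · rw [← he]; simp
      · rw [hM] at hlt ⊢
        have hab : grid n M < grid n (M + 1) := grid_lt hn M
        have hw : grid n (M + 1) - grid n M = 1 / n := grid_succ_sub hn M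
        have hnpos : (0:ℝ) < n := by exact_mod_cast hn
        have hk := slope_le_slope' hconv hab hlt hab.le hlt.le
        rw [sig_succ hn]
        rw [hw] at hk
        have h6 := mul_le_mul_of_nonneg_left hk hnpos.le
        have e : (n:ℝ) * ((f x - f (grid n (M + 1))) * (1 / n)) = f x - f (grid n (M + 1)) := by
          field_simp
        calc (n:ℝ) * (f (grid n (M + 1)) - f (grid n M)) * (x - grid n (M + 1))
            = (n:ℝ) * ((f (grid n (M + 1)) - f (grid n M)) * (x - grid n (M + 1))) := by ring
          _ ≤ (n:ℝ) * ((f x - f (grid n (M + 1))) * (1 / n)) := h6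
          _ = f x - f (grid n (M + 1)) := e
  have hfin : f (min x (grid n N)) - f (min x (grid n 1)) + (f (max x (grid n N)) - f (grid n N))
      ≤ f x := by
    have h0 : 0 ≤ f (min x (grid n 1)) := hf0 _
    rcases le_total x (grid n N) with hxg | hgx
    · rw [min_eq_left hxg, max_eq_right hxg]; linarith
    · rw [min_eq_right hgx, max_eq_left hgx]; linarith
  calc sig f n N * u N + ∑ i ∈ Finset.range (N - 1), sig f n (i + 1) * (u (i + 1) - u (i + 2))
      ≤ (f (max x (grid n N)) - f (grid n N)) +
        (f (min x (grid n N)) - f (min x (grid n 1))) := by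
        rw [← htel] at *; linarith [hsum, hlast]
    _ ≤ f x := by linarith

include hn hconv hmono in
lemma TT_ge (x : ℝ) :
    f (min (x - 1 / n) (grid n (2 * n ^ 2 - 1))) - f (grid n 0) ≤ TT f n x := by
  have hN : 1 ≤ 2 * n ^ 2 := by nlinarith
  set N := 2 * n ^ 2 with hNdef
  set u : ℕ → ℝ := fun j => max (x - grid n j) 0 with hu
  have habel : TT f n x = sig f n N * u N +
      ∑ i ∈ Finset.range (N - 1), sig f n (i + 1) * (u (i + 1) - u (i + 2)) :=
    abel_sum (sig f n) u (sig_zero f n) N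
  rw [habel]
  set y := x - 1 / n with hy
  have hsum : ∑ i ∈ Finset.range (N - 1), (f (min y (grid n (i + 1))) - f (min y (grid n i)))
      ≤ ∑ i ∈ Finset.range (N - 1), sig f n (i + 1) * (u (i + 1) - u (i + 2)) :=
    Finset.sum_le_sum fun i _ => lower_term hn hconv i x
  have htel : ∑ i ∈ Finset.range (N - 1),
      (f (min y (grid n (i + 1))) - f (min y (grid n i))) =
      f (min y (grid n (N - 1))) - f (min y (grid n 0)) :=
    Finset.sum_range_sub (fun i => f (min y (grid n i))) (N - 1)
  have hlast : 0 ≤ sig f n N * u N :=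
    mul_nonneg (sig_nonneg hn f hmono N) (le_max_right _ _)
  have hmin : f (min y (grid n 0)) ≤ f (grid n 0) := hmono (min_le_right _ _)
  rw [htel] at hsum
  linarith

end TTbounds
section TTint
variable {f : ℝ → ℝ} {n : ℕ}

lemma continuous_TT (f : ℝ → ℝ) (n : ℕ) : Continuous (TT f n) := by
  unfold TT
  exact continuous_finset_sum _ fun i _ =>
    continuous_const.mul ((continuous_id.sub continuous_const).max continuous_const)

lemma TT_nonneg (hn : 1 ≤ n) (hconv : ConvexOn ℝ univ f) (hmono : Monotone f) (x : ℝ) :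
    0 ≤ TT f n x := by
  unfold TT
  refine Finset.sum_nonneg fun i _ => mul_nonneg ?_ (le_max_right _ _)
  have := sig_mono hn f hconv hmono i
  linarith

lemma integrable_TT (μ : Measure ℝ) [IsFiniteMeasure μ] (hμ : Integrable (fun x => x) μ)
    (f : ℝ → ℝ) (n : ℕ) : Integrable (TT f n) μ := by
  unfold TT
  exact integrable_finset_sum _ fun i _ => (integrable_call μ hμ _).const_mul _

lemma integral_TT (μ : Measure ℝ) [IsFiniteMeasure μ] (hμ : Integrable (fun x => x) μ)
    (f : ℝ → ℝ) (n : ℕ) :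
    ∫ x, TT f n x ∂μ = ∑ i ∈ Finset.range (2 * n ^ 2),
      (sig f n (i + 1) - sig f n i) * call μ (grid n (i + 1)) := by
  unfold TT
  rw [integral_finset_sum _ fun i _ => (integrable_call μ hμ _).const_mul _]
  exact Finset.sum_congr rfl fun i _ => integral_const_mul _ _

lemma TT_integral_le (η χ : Measure ℝ) [IsFiniteMeasure η] [IsFiniteMeasure χ]
    (hη : Integrable (fun x => x) η) (hχ : Integrable (fun x => x) χ)
    (hcall : ∀ k, call η k ≤ call χ k)
    (hn : 1 ≤ n) (hconv : ConvexOn ℝ univ f) (hmono : Monotone f) :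
    ∫ x, TT f n x ∂η ≤ ∫ x, TT f n x ∂χ := by
  rw [integral_TT η hη, integral_TT χ hχ]
  refine Finset.sum_le_sum fun i _ => ?_
  have hc : 0 ≤ sig f n (i + 1) - sig f n i := by
    have := sig_mono hn f hconv hmono i
    linarith
  exact mul_le_mul_of_nonneg_left (hcall _) hc

end TTint
open Filter Topology in
lemma lemC (η χ : Measure ℝ) [IsFiniteMeasure η] [IsFiniteMeasure χ]
    (hη : Integrable (fun x => x) η) (hχ : Integrable (fun x => x) χ)
    (hcall : ∀ k, call η k ≤ call χ k)
    (f : ℝ → ℝ) (hf0 : ∀ x, 0 ≤ f x) (hconv : ConvexOn ℝ univ f) (hmono : Monotone f)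
    (hlim : Tendsto f atBot (𝓝 0))
    (hfη : Integrable f η) (hfχ : Integrable f χ) :
    ∫ x, f x ∂η ≤ ∫ x, f x ∂χ := by
  have hcont : Continuous f := hconv.locallyLipschitz.continuous
  -- pointwise convergence
  have key : ∀ x : ℝ, Tendsto (fun n : ℕ => TT f (n + 1) x) atTop (𝓝 (f x)) := by
    intro x
    have hup : ∀ n : ℕ, TT f (n + 1) x ≤ f x := fun n =>
      TT_le (Nat.le_add_left 1 n) hconv hmono hf0 x
    have hlow : ∀ n : ℕ, f (min (x - 1 / (n + 1 : ℕ)) (grid (n + 1) (2 * (n + 1) ^ 2 - 1)))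
        - f (grid (n + 1) 0) ≤ TT f (n + 1) x := fun n =>
      TT_ge (Nat.le_add_left 1 n) hconv hmono x
    have h1 : Tendsto (fun n : ℕ => f (grid (n + 1) 0)) atTop (𝓝 0) := by
      have hg : ∀ n : ℕ, grid (n + 1) 0 = -((n : ℝ) + 1) := by
        intro n; simp [grid]
      simp_rw [hg]
      apply hlim.comp
      have h3 : Tendsto (fun n : ℕ => ((n : ℝ) + 1)) atTop atTop :=
        tendsto_atTop_add_const_right _ _ tendsto_natCast_atTop_atTop
      exact tendsto_neg_atBot_iff.mpr h3
    have h2 : Tendsto (fun n : ℕ =>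
        f (min (x - 1 / (n + 1 : ℕ)) (grid (n + 1) (2 * (n + 1) ^ 2 - 1)))) atTop (𝓝 (f x)) := by
      have hxev : ∀ᶠ n : ℕ in atTop,
          f (x - 1 / ((n : ℝ) + 1))
            = f (min (x - 1 / (n + 1 : ℕ)) (grid (n + 1) (2 * (n + 1) ^ 2 - 1))) := by
        filter_upwards [eventually_ge_atTop (Nat.ceil |x|)] with n hn
        have hnx : |x| ≤ (n : ℝ) := le_trans (Nat.le_ceil _) (by exact_mod_cast hn)
        have hcast : ((2 * (n + 1) ^ 2 - 1 : ℕ) : ℝ) = 2 * ((n : ℝ) + 1) ^ 2 - 1 := by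
          have h1' : (1 : ℕ) ≤ 2 * (n + 1) ^ 2 := by nlinarith
          push_cast [h1']
          ring
        have hval : grid (n + 1) (2 * (n + 1) ^ 2 - 1)
            = ((n : ℝ) + 1) - 1 / ((n : ℝ) + 1) := by
          simp only [grid, hcast]
          push_cast
          field_simp
          ring
        have hcast1 : ((n + 1 : ℕ) : ℝ) = (n : ℝ) + 1 := by push_cast; ring
        have hge : x - 1 / ((n : ℝ) + 1) ≤ grid (n + 1) (2 * (n + 1) ^ 2 - 1) := by
          rw [hval]
          have hx1 := le_abs_self x
          linarith
        rw [hcast1, min_eq_left hge]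
      refine Tendsto.congr' hxev ?_
      have h4 : Tendsto (fun n : ℕ => x - 1 / ((n : ℝ) + 1)) atTop (𝓝 x) := by
        have h5 := tendsto_one_div_add_atTop_nhds_zero_nat (𝕜 := ℝ)
        have h6 : Tendsto (fun _ : ℕ => x) atTop (𝓝 x) := tendsto_const_nhds
        simpa using h6.sub h5
      exact (hcont.tendsto x).comp h4
    have hlowlim : Tendsto (fun n : ℕ =>
        f (min (x - 1 / (n + 1 : ℕ)) (grid (n + 1) (2 * (n + 1) ^ 2 - 1)))
          - f (grid (n + 1) 0)) atTop (𝓝 (f x)) := by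
      simpa using h2.sub h1
    exact tendsto_of_tendsto_of_tendsto_of_le_of_le hlowlim tendsto_const_nhds hlow hup
  -- dominated convergence on both sides
  have hDC : ∀ (μ : Measure ℝ) [IsFiniteMeasure μ], Integrable (fun x => x) μ →
      Integrable f μ →
      Tendsto (fun n : ℕ => ∫ x, TT f (n + 1) x ∂μ) atTop (𝓝 (∫ x, f x ∂μ)) := by
    intro μ _ hμ hfμ
    refine tendsto_integral_of_dominated_convergence f
      (fun n => (continuous_TT f (n + 1)).aestronglyMeasurable) hfμ ?_ ?_
    · intro n
      filter_upwards with x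
      rw [Real.norm_eq_abs,
        abs_of_nonneg (TT_nonneg (Nat.le_add_left 1 n) hconv hmono x)]
      exact TT_le (Nat.le_add_left 1 n) hconv hmono hf0 x
    · filter_upwards with x
      exact key x
  exact le_of_tendsto_of_tendsto' (hDC η hη hfη) (hDC χ hχ hfχ)
    fun n => TT_integral_le η χ hη hχ hcall (Nat.le_add_left 1 n) hconv hmono

open Filter Topology in
lemma pc_of_pcd_call (η χ : Measure ℝ) [IsFiniteMeasure η] [IsFiniteMeasure χ]
    (hη : Integrable (fun x => x) η) (hχ : Integrable (fun x => x) χ)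
    (h : le_pcd η χ) (hcall : ∀ k, call η k ≤ call χ k) : le_pc η χ := by
  have hmass : (η univ).toReal ≤ (χ univ).toReal := by
    have h1 := h (fun _ => (1:ℝ)) (fun _ => zero_le_one) (convexOn_const _ convex_univ)
      antitone_const (integrable_const _) (integrable_const _)
    simpa [integral_const, smul_eq_mul, Measure.real] using h1
  intro f hf0 hconv hfη hfχ
  have hcont : Continuous f := hconv.locallyLipschitz.continuous
  have hseg : ∀ {x z y : ℝ}, x ≤ z → z ≤ y → f z ≤ max (f x) (f y) := by
    intro x z y hxz hzy
    exact hconv.le_on_segment (mem_univ x) (mem_univ y)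
      (by rw [segment_eq_Icc (hxz.trans hzy)]; exact ⟨hxz, hzy⟩)
  by_cases hA : Antitone f
  · exact h f hf0 hconv hA hfη hfχ
  by_cases hM : Monotone f
  · -- monotone nondecreasing case
    have hbdd : BddBelow (Set.range f) := ⟨0, fun y ⟨x, hx⟩ => hx ▸ hf0 x⟩
    set L := ⨅ x, f x with hL
    have hL0 : 0 ≤ L := le_ciInf hf0
    have hLle : ∀ x, L ≤ f x := fun x => ciInf_le hbdd x
    have hlim : Tendsto f atBot (𝓝 L) := tendsto_atBot_ciInf hM hbdd
    have hgconv : ConvexOn ℝ univ (fun x => f x - L) :=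
      hconv.sub (concaveOn_const L convex_univ)
    have hgintη : Integrable (fun x => f x - L) η := hfη.sub (integrable_const L)
    have hgintχ : Integrable (fun x => f x - L) χ := hfχ.sub (integrable_const L)
    have hkey := lemC η χ hη hχ hcall (fun x => f x - L)
      (fun x => sub_nonneg.mpr (hLle x)) hgconv
      (fun p q hpq => sub_le_sub_right (hM hpq) L)
      (by simpa using hlim.sub (tendsto_const_nhds : Tendsto (fun _ : ℝ => L) atBot (𝓝 L)))
      hgintη hgintχ
    have e1 : ∫ x, (f x - L) ∂η = ∫ x, f x ∂η - (η univ).toReal * L := by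
      rw [integral_sub hfη (integrable_const L), integral_const, smul_eq_mul]; rfl
    have e2 : ∫ x, (f x - L) ∂χ = ∫ x, f x ∂χ - (χ univ).toReal * L := by
      rw [integral_sub hfχ (integrable_const L), integral_const, smul_eq_mul]; rfl
    rw [e1, e2] at hkey
    nlinarith [mul_le_mul_of_nonneg_right hmass hL0]
  · -- general case
    obtain ⟨a, b, hab, hfab⟩ : ∃ a b : ℝ, a ≤ b ∧ f a < f b := by
      by_contra hc
      push_neg at hc
      exact hA fun p q hpq => hc p q hpq
    obtain ⟨u, v, huv, hfvu⟩ : ∃ u v : ℝ, u ≤ v ∧ f v < f u := by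
      by_contra hc
      push_neg at hc
      exact hM fun p q hpq => hc p q hpq
    have hKne : (Set.Icc (min u a) (max v b)).Nonempty :=
      ⟨u, min_le_left u a, huv.trans (le_max_left v b)⟩
    obtain ⟨c, hcK, hc⟩ := isCompact_Icc.exists_isMinOn hKne hcont.continuousOn
    rw [isMinOn_iff] at hc
    have hglob : ∀ x, f c ≤ f x := by
      intro x
      rcases le_total (min u a) x with h1 | h1
      · rcases le_total x (max v b) with h2 | h2
        · exact hc x ⟨h1, h2⟩
        · have hbx : b ≤ x := le_trans (le_max_right v b) h2
          have h3 : f b ≤ max (f a) (f x) := hseg hab hbx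
          have hcb : f c ≤ f b :=
            hc b ⟨(min_le_right u a).trans hab, le_max_right v b⟩
          rcases le_total (f a) (f x) with hh | hh
          · rw [max_eq_right hh] at h3; linarith
          · rw [max_eq_left hh] at h3; linarith
      · have hxu : x ≤ u := le_trans h1 (min_le_left u a)
        have h3 : f u ≤ max (f x) (f v) := hseg hxu huv
        have hcu : f c ≤ f u := hc u ⟨min_le_left u a, huv.trans (le_max_left v b)⟩
        rcases le_total (f x) (f v) with hh | hh
        · rw [max_eq_right hh] at h3; linarith
        · rw [max_eq_left hh] at h3; linarith
    have hdec : ∀ {x y : ℝ}, x ≤ y → y ≤ c → f y ≤ f x := by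
      intro x y hxy hyc
      have h3 : f y ≤ max (f x) (f c) := hseg hxy hyc
      rwa [max_eq_left (hglob x)] at h3
    have hinc : ∀ {x y : ℝ}, c ≤ x → x ≤ y → f x ≤ f y := by
      intro x y hcx hxy
      have h3 : f x ≤ max (f c) (f y) := hseg hcx hxy
      rwa [max_eq_right (hglob y)] at h3
    set g := fun x => f (min x c) with hg
    set p := fun x => f (max x c) - f c with hp
    have hfg : ∀ x, f x = g x + p x := by
      intro x
      rcases le_total x c with hx | hx
      · simp [hg, hp, min_eq_left hx, max_eq_right hx]
      · simp only [hg, hp, min_eq_right hx, max_eq_left hx]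
        ring
    have hgconv : ConvexOn ℝ univ g := by
      refine ⟨convex_univ, fun x _ y _ s t hs ht hst => ?_⟩
      simp only [smul_eq_mul, hg]
      have hmin1 : s * min x c + t * min y c ≤ min (s * x + t * y) c := by
        refine le_min ?_ ?_
        · nlinarith [min_le_left x c, min_le_left y c]
        · have hne : s * c + t * c = c := by rw [← add_mul, hst, one_mul]
          nlinarith [min_le_right x c, min_le_right y c]
      have h5 : f (min (s * x + t * y) c) ≤ f (s * min x c + t * min y c) :=
        hdec hmin1 (min_le_right _ _)
      have h6 := hconv.2 (mem_univ (min x c)) (mem_univ (min y c)) hs ht hst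
      simp only [smul_eq_mul] at h6
      exact h5.trans h6
    have hganti : Antitone g := fun x y hxy => hdec (min_le_min hxy le_rfl) (min_le_right _ _)
    have hg0 : ∀ x, 0 ≤ g x := fun x => hf0 _
    have hgcont : Continuous g := hcont.comp (continuous_id.min continuous_const)
    have hgint : ∀ (μ : Measure ℝ), IsFiniteMeasure μ → Integrable f μ → Integrable g μ := by
      intro μ hfin hfμ
      refine (hfμ.add (integrable_const (f c))).mono' hgcont.aestronglyMeasurable ?_
      filter_upwards with x
      rw [Real.norm_eq_abs, abs_of_nonneg (hg0 x)]
      simp only [Pi.add_apply]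
      rcases le_total x c with hx | hx
      · simp only [hg, min_eq_left hx]
        linarith [hf0 c]
      · simp only [hg, min_eq_right hx]
        linarith [hf0 x]
    have hpconv : ConvexOn ℝ univ p := by
      refine ⟨convex_univ, fun x _ y _ s t hs ht hst => ?_⟩
      simp only [smul_eq_mul, hp]
      have hmax1 : max (s * x + t * y) c ≤ s * max x c + t * max y c := by
        refine max_le ?_ ?_
        · nlinarith [le_max_left x c, le_max_left y c]
        · have hne : s * c + t * c = c := by rw [← add_mul, hst, one_mul]
          nlinarith [le_max_right x c, le_max_right y c]
      have h5 : f (max (s * x + t * y) c) ≤ f (s * max x c + t * max y c) :=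
        hinc (le_max_right _ _) hmax1
      have h6 := hconv.2 (mem_univ (max x c)) (mem_univ (max y c)) hs ht hst
      simp only [smul_eq_mul] at h6
      have hfc : s * f c + t * f c = f c := by rw [← add_mul, hst, one_mul]
      nlinarith [h5, h6]
    have hpmono : Monotone p := fun x y hxy =>
      sub_le_sub_right (hinc (le_max_right x c) (max_le_max hxy le_rfl)) _
    have hp0 : ∀ x, 0 ≤ p x := fun x => sub_nonneg.mpr (hglob _)
    have hplim : Tendsto p atBot (𝓝 0) := by
      refine Tendsto.congr' ?_ (tendsto_const_nhds (α := ℝ) (f := atBot))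
      filter_upwards [eventually_le_atBot c] with x hx
      simp [hp, max_eq_right hx]
    have hpeq : p = fun x => f x - g x := funext fun x => by rw [hfg x]; ring
    have hpint : ∀ (μ : Measure ℝ), IsFiniteMeasure μ → Integrable f μ → Integrable g μ →
        Integrable p μ := by
      intro μ hfin hfμ hgμ
      rw [hpeq]
      exact hfμ.sub hgμ
    have hgη := hgint η inferInstance hfη
    have hgχ := hgint χ inferInstance hfχ
    have hpη := hpint η inferInstance hfη hgη
    have hpχ := hpint χ inferInstance hfχ hgχ
    have h1 := h g hg0 hgconv hganti hgη hgχ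
    have h2 := lemC η χ hη hχ hcall p hp0 hpconv hpmono hplim hpη hpχ
    have e : ∀ (μ : Measure ℝ), IsFiniteMeasure μ → Integrable f μ → Integrable g μ →
        Integrable p μ → ∫ x, f x ∂μ = ∫ x, g x ∂μ + ∫ x, p x ∂μ := by
      intro μ hfin hfμ hgμ hpμ
      rw [← integral_add hgμ hpμ]
      exact integral_congr_ae (Filter.Eventually.of_forall fun x => hfg x)
    rw [e η inferInstance hfη hgη hpη, e χ inferInstance hfχ hgχ hpχ]
    linarith

lemma convexOn_call (k : ℝ) : ConvexOn ℝ univ (fun x : ℝ => max (x - k) 0) :=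
  ((convexOn_id convex_univ).sub (concaveOn_const k convex_univ)).sup
    (convexOn_const 0 convex_univ)

open Filter Topology in
lemma call_tendsto_zero (χ : Measure ℝ) [IsFiniteMeasure χ]
    (hχ : Integrable (fun x => x) χ) :
    Tendsto (fun n : ℕ => call χ n) atTop (𝓝 0) := by
  have h0 : (0:ℝ) = ∫ x, (0:ℝ) ∂χ := by simp
  rw [h0]
  refine tendsto_integral_of_dominated_convergence (fun x => |x|)
    (fun n => ((continuous_id.sub continuous_const).max continuous_const).aestronglyMeasurable)
    hχ.abs ?_ ?_
  · intro n
    filter_upwards with x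
    rw [Real.norm_eq_abs, abs_of_nonneg (le_max_right _ _)]
    rcases le_total (x - n) 0 with hx | hx
    · rw [max_eq_right hx]; positivity
    · rw [max_eq_left hx]
      have h1 : (0:ℝ) ≤ n := Nat.cast_nonneg n
      have := le_abs_self x
      linarith
  · filter_upwards with x
    refine Tendsto.congr' ?_ (tendsto_const_nhds : Tendsto (fun _ : ℕ => (0:ℝ)) atTop (𝓝 0))
    filter_upwards [eventually_ge_atTop (Nat.ceil (max x 0))] with n hn
    have : x ≤ (n:ℝ) := by
      have h1 : max x 0 ≤ (Nat.ceil (max x 0) : ℝ) := Nat.le_ceil _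
      have h2 : ((Nat.ceil (max x 0) : ℕ) : ℝ) ≤ n := by exact_mod_cast hn
      have := le_max_left x 0
      linarith
    rw [max_eq_right (by linarith)]


theorem c_eq_zero_iff_le_pc (η χ : Measure ℝ) [IsFiniteMeasure η] [IsFiniteMeasure χ]
    (hη : Integrable (fun x => x) η) (hχ : Integrable (fun x => x) χ)
    (h : le_pcd η χ) :
    sSup {d : ℝ | ∃ k : ℝ, d = call η k - call χ k} = 0 ↔ le_pc η χ := by
  have hmass : (η univ).toReal ≤ (χ univ).toReal := by
    have h1 := h (fun _ => (1:ℝ)) (fun _ => zero_le_one) (convexOn_const _ convex_univ)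
      antitone_const (integrable_const _) (integrable_const _)
    simpa [integral_const, smul_eq_mul, Measure.real] using h1
  set S := {d : ℝ | ∃ k : ℝ, d = call η k - call χ k} with hS
  have hSne : S.Nonempty := ⟨call η 0 - call χ 0, 0, rfl⟩
  have hbdd : BddAbove S := by
    refine ⟨∫ x, |x| ∂η + |∫ x, x ∂χ|, ?_⟩
    rintro d ⟨k, rfl⟩
    rcases le_total 0 k with hk | hk
    · have h1 : call η k ≤ ∫ x, |x| ∂η := by
        refine integral_mono (integrable_call η hη k) hη.abs fun x => ?_
        rcases le_total (x - k) 0 with hx | hx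
        · rw [max_eq_right hx]; positivity
        · rw [max_eq_left hx]
          have := le_abs_self x
          linarith
      have h2 := call_nonneg χ k
      have h3 := abs_nonneg (∫ x, x ∂χ)
      linarith
    · -- k ≤ 0
      have h1 : call η k ≤ ∫ x, |x| ∂η - (η univ).toReal * k := by
        have hint : Integrable (fun x : ℝ => |x| - k) η := hη.abs.sub (integrable_const k)
        have := integral_mono (integrable_call η hη k) hint fun x => ?_
        · rwa [integral_sub hη.abs (integrable_const k), integral_const, smul_eq_mul] at this
        · rcases le_total (x - k) 0 with hx | hx
          · rw [max_eq_right hx]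
            have := abs_nonneg x
            linarith
          · rw [max_eq_left hx]
            have := le_abs_self x
            linarith
      have h2 : ∫ x, x ∂χ - (χ univ).toReal * k ≤ call χ k := by
        have hint : Integrable (fun x : ℝ => x - k) χ := hχ.sub (integrable_const k)
        have := integral_mono hint (integrable_call χ hχ k) fun x => le_max_left _ _
        rwa [integral_sub hχ (integrable_const k), integral_const, smul_eq_mul] at this
      have h3 : (η univ).toReal * (-k) ≤ (χ univ).toReal * (-k) :=
        mul_le_mul_of_nonneg_right hmass (by linarith)
      have h4 := neg_abs_le (∫ x, x ∂χ)
      nlinarith [h1, h2, h3, h4]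
  constructor
  · intro hsup
    have hcall : ∀ k, call η k ≤ call χ k := by
      intro k
      have h1 : call η k - call χ k ≤ sSup S := le_csSup hbdd ⟨k, rfl⟩
      rw [hsup] at h1
      linarith
    exact pc_of_pcd_call η χ hη hχ h hcall
  · intro hpc
    have hcall : ∀ k, call η k ≤ call χ k := fun k =>
      hpc (fun x => max (x - k) 0) (fun x => le_max_right _ _) (convexOn_call k)
        (integrable_call η hη k) (integrable_call χ hχ k)
    have hle : sSup S ≤ 0 := csSup_le hSne (by rintro d ⟨k, rfl⟩; linarith [hcall k])
    have hge : (0:ℝ) ≤ sSup S := by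
      have hub : ∀ n : ℕ, -(call χ n) ≤ sSup S := fun n =>
        le_trans (by linarith [call_nonneg η (n : ℝ)]) (le_csSup hbdd ⟨(n : ℝ), rfl⟩)
      have hlim : Filter.Tendsto (fun n : ℕ => -(call χ n)) Filter.atTop (nhds 0) := by
        simpa using (call_tendsto_zero χ hχ).neg
      exact le_of_tendsto hlim (Filter.Eventually.of_forall hub)
    linarith
end

section
/- Let η, η', χ be finite positive measures with η(ℝ) = η'(ℝ), η ≤_pcd χ, and η' ≤_pcd χ. Then Up(η,η') ≤_pcd χ, where Up(η,η') is the law of max(G_η(U), G_{η'}(U)) for U uniform on [0, η(ℝ)]. -/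
open MeasureTheory Set

open Filter Topology

noncomputable def mmass (η : Measure ℝ) : ℝ := (η Set.univ).toReal
noncomputable def cdf (η : Measure ℝ) (x : ℝ) : ℝ := (η (Set.Iic x)).toReal
noncomputable def quant (η : Measure ℝ) (u : ℝ) : ℝ := sInf {k : ℝ | u ≤ cdf η k}

section quantile

variable (η : Measure ℝ) [IsFiniteMeasure η]

lemma cdf_nonneg (x : ℝ) : 0 ≤ cdf η x := ENNReal.toReal_nonneg

lemma cdf_mono : Monotone (cdf η) := fun a b hab =>
  ENNReal.toReal_le_toReal (measure_ne_top _ _) (measure_ne_top _ _) |>.mpr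
    (measure_mono (Iic_subset_Iic.2 hab))

lemma cdf_le_mmass (x : ℝ) : cdf η x ≤ mmass η :=
  ENNReal.toReal_le_toReal (measure_ne_top _ _) (measure_ne_top _ _) |>.mpr
    (measure_mono (subset_univ _))

lemma tendsto_cdf_atTop : Tendsto (cdf η) atTop (𝓝 (mmass η)) :=
  (ENNReal.tendsto_toReal (measure_ne_top η univ)).comp (tendsto_measure_Iic_atTop η)

lemma exists_cdf_lt {u : ℝ} (hu : 0 < u) : ∃ b : ℝ, cdf η b < u := by
  have h1 : (⋂ n : ℕ, Iic (-(n:ℝ))) = (∅ : Set ℝ) := by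
    ext x
    simp only [mem_iInter, mem_Iic, mem_empty_iff_false, iff_false, not_forall, not_le]
    obtain ⟨n, hn⟩ := exists_nat_gt (-x)
    exact ⟨n, by linarith⟩
  have h2 := tendsto_measure_iInter_atTop (μ := η) (s := fun n : ℕ => Iic (-(n:ℝ)))
      (fun n => measurableSet_Iic.nullMeasurableSet)
      (fun a b hab => Iic_subset_Iic.2 (by simp; exact_mod_cast hab))
      ⟨0, measure_ne_top _ _⟩
  rw [h1, measure_empty] at h2
  have h3 : Tendsto (fun n : ℕ => cdf η (-(n:ℝ))) atTop (𝓝 0) := by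
    have := (ENNReal.tendsto_toReal (a := 0) (by simp)).comp h2
    exact this
  obtain ⟨n, hn⟩ := ((tendsto_order.1 h3).2 u hu).exists
  exact ⟨-(n:ℝ), hn⟩

lemma bddBelow_q {u : ℝ} (hu : 0 < u) : BddBelow {k : ℝ | u ≤ cdf η k} := by
  obtain ⟨b, hb⟩ := exists_cdf_lt η hu
  refine ⟨b, fun k hk => ?_⟩
  by_contra hkb
  push_neg at hkb
  exact absurd (le_trans hk (cdf_mono η hkb.le)) (not_le.2 hb)

lemma nonempty_q {u : ℝ} (hu : u < mmass η) : {k : ℝ | u ≤ cdf η k}.Nonempty := by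
  obtain ⟨k, hk⟩ := ((tendsto_order.1 (tendsto_cdf_atTop η)).1 u hu).exists
  exact ⟨k, hk.le⟩

lemma le_cdf_of_forall {u a : ℝ} (h : ∀ ε > (0:ℝ), u ≤ cdf η (a + ε)) : u ≤ cdf η a := by
  have h1 : (⋂ n : ℕ, Iic (a + 1/((n:ℝ)+1))) = Iic a := by
    ext x
    simp only [mem_iInter, mem_Iic]
    constructor
    · intro hx
      by_contra hax
      push_neg at hax
      obtain ⟨n, hn⟩ := exists_nat_one_div_lt (show (0:ℝ) < x - a by linarith)
      have := hx n
      linarith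
    · intro hx n
      have : (0:ℝ) < 1/((n:ℝ)+1) := by positivity
      linarith
  have hmono : Antitone (fun n : ℕ => Iic (a + 1/((n:ℝ)+1))) := by
    intro n m hnm
    apply Iic_subset_Iic.2
    have hc : ((n:ℝ)+1) ≤ ((m:ℝ)+1) := by exact_mod_cast Nat.succ_le_succ hnm
    have : (1:ℝ)/((m:ℝ)+1) ≤ 1/((n:ℝ)+1) :=
      one_div_le_one_div_of_le (by positivity) hc
    linarith
  have h2 := tendsto_measure_iInter_atTop (μ := η)
      (fun n => measurableSet_Iic.nullMeasurableSet) hmono ⟨0, measure_ne_top _ _⟩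
  rw [h1] at h2
  have h3 : Tendsto (fun n : ℕ => cdf η (a + 1/((n:ℝ)+1))) atTop (𝓝 (cdf η a)) :=
    (ENNReal.tendsto_toReal (measure_ne_top _ _)).comp h2
  exact ge_of_tendsto' h3 fun n => h _ (by positivity)

lemma quant_le_iff {u a : ℝ} (h0 : 0 < u) (hm : u < mmass η) :
    quant η u ≤ a ↔ u ≤ cdf η a := by
  constructor
  · intro h
    apply le_cdf_of_forall
    intro ε hε
    have hlt : sInf {k : ℝ | u ≤ cdf η k} < a + ε := lt_of_le_of_lt h (by linarith)
    obtain ⟨k, hk, hka⟩ := (csInf_lt_iff (bddBelow_q η h0) (nonempty_q η hm)).1 hlt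
    exact le_trans hk (cdf_mono η hka.le)
  · intro h
    exact csInf_le (bddBelow_q η h0) h

lemma quant_monoOn : MonotoneOn (quant η) (Ioo 0 (mmass η)) := by
  intro u hu v hv huv
  exact csInf_le_csInf (bddBelow_q η hu.1) (nonempty_q η hv.2)
    (fun k hk => le_trans huv hk)

lemma map_quant : Measure.map (quant η) (volume.restrict (Ioo 0 (mmass η))) = η := by
  have hqm : AEMeasurable (quant η) (volume.restrict (Ioo 0 (mmass η))) :=
    aemeasurable_restrict_of_monotoneOn measurableSet_Ioo (quant_monoOn η)
  refine Measure.ext_of_Iic _ _ fun a => ?_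
  rw [Measure.map_apply_of_aemeasurable hqm measurableSet_Iic,
      Measure.restrict_apply' measurableSet_Ioo]
  have hset : quant η ⁻¹' Iic a ∩ Ioo 0 (mmass η) = Ioc 0 (cdf η a) ∩ Ioo 0 (mmass η) := by
    ext u
    simp only [mem_inter_iff, mem_preimage, mem_Iic, mem_Ioo, mem_Ioc]
    constructor
    · rintro ⟨h1, h2⟩
      exact ⟨⟨h2.1, (quant_le_iff η h2.1 h2.2).1 h1⟩, h2⟩
    · rintro ⟨h1, h2⟩
      exact ⟨(quant_le_iff η h2.1 h2.2).2 h1.2, h2⟩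
  rw [hset]
  have ht0 : 0 ≤ cdf η a := cdf_nonneg η a
  have htm : cdf η a ≤ mmass η := cdf_le_mmass η a
  have hgoal : volume (Ioc 0 (cdf η a) ∩ Ioo 0 (mmass η)) = ENNReal.ofReal (cdf η a) := by
    rcases eq_or_lt_of_le htm with heq | hlt
    · have hs : Ioc 0 (cdf η a) ∩ Ioo 0 (mmass η) = Ioo 0 (mmass η) := by
        ext u
        simp only [mem_inter_iff, mem_Ioc, mem_Ioo]
        constructor
        · exact fun h => h.2
        · intro h
          exact ⟨⟨h.1, heq ▸ h.2.le⟩, h⟩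
      rw [hs, Real.volume_Ioo, sub_zero, heq]
    · have hs : Ioc 0 (cdf η a) ∩ Ioo 0 (mmass η) = Ioc 0 (cdf η a) := by
        ext u
        simp only [mem_inter_iff, mem_Ioc, mem_Ioo, and_iff_left_iff_imp]
        exact fun h => ⟨h.1, lt_of_le_of_lt h.2 hlt⟩
      rw [hs, Real.volume_Ioc, sub_zero]
  rw [hgoal]
  exact ENNReal.ofReal_toReal (measure_ne_top _ _)

end quantile

section trunc

variable {f : ℝ → ℝ} {c : ℝ}

noncomputable def trSlope (f : ℝ → ℝ) (c : ℝ) : ℝ :=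
  sSup ((fun y => (f c - f y) / (c - y)) '' Iio c)

noncomputable def trunc (f : ℝ → ℝ) (c : ℝ) (x : ℝ) : ℝ :=
  if x < c then f c + trSlope f c * (x - c) else f x

lemma trSlope_bddAbove (hcvx : ConvexOn ℝ univ f) :
    BddAbove ((fun y => (f c - f y) / (c - y)) '' Iio c) := by
  refine ⟨(f (c+1) - f c) / ((c+1) - c), ?_⟩
  rintro r ⟨y, hy, rfl⟩
  exact hcvx.slope_mono_adjacent (mem_univ y) (mem_univ (c+1)) hy (by linarith)

lemma trSlope_ne : ((fun y => (f c - f y) / (c - y)) '' Iio c).Nonempty :=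
  ⟨_, mem_image_of_mem _ (show c - 1 ∈ Iio c by simp)⟩

lemma le_trSlope (hcvx : ConvexOn ℝ univ f) {y : ℝ} (hy : y < c) :
    (f c - f y) / (c - y) ≤ trSlope f c :=
  le_csSup (trSlope_bddAbove hcvx) (mem_image_of_mem _ hy)

lemma trSlope_le (hcvx : ConvexOn ℝ univ f) {z : ℝ} (hz : c < z) :
    trSlope f c ≤ (f z - f c) / (z - c) := by
  refine csSup_le trSlope_ne ?_
  rintro r ⟨y, hy, rfl⟩
  exact hcvx.slope_mono_adjacent (mem_univ y) (mem_univ z) hy hz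

lemma trSlope_nonpos (hanti : Antitone f) : trSlope f c ≤ 0 := by
  refine csSup_le trSlope_ne ?_
  rintro r ⟨y, hy, rfl⟩
  simp only [mem_Iio] at hy
  exact div_nonpos_of_nonpos_of_nonneg (by linarith [hanti hy.le]) (by linarith)

lemma line_le (hcvx : ConvexOn ℝ univ f) (x : ℝ) :
    f c + trSlope f c * (x - c) ≤ f x := by
  rcases lt_trichotomy x c with hx | hx | hx
  · have h := le_trSlope hcvx hx
    rw [div_le_iff₀ (by linarith)] at h
    nlinarith
  · simp [hx]
  · have h := trSlope_le hcvx hx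
    rw [le_div_iff₀ (by linarith)] at h
    linarith

lemma trunc_le (hcvx : ConvexOn ℝ univ f) (x : ℝ) : trunc f c x ≤ f x := by
  unfold trunc
  split_ifs with h
  · exact line_le hcvx x
  · exact le_refl _

lemma trunc_nonneg (hf0 : ∀ x, 0 ≤ f x) (hanti : Antitone f) (x : ℝ) :
    0 ≤ trunc f c x := by
  unfold trunc
  split_ifs with h
  · have h1 : 0 ≤ (-(trSlope f c)) * (-(x - c)) :=
      mul_nonneg (by linarith [trSlope_nonpos (f := f) (c := c) hanti]) (by linarith)
    nlinarith [hf0 c]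
  · exact hf0 x

lemma trunc_eq (x : ℝ) (hx : c ≤ x) : trunc f c x = f x := if_neg (not_lt.2 hx)

lemma trunc_anti (hanti : Antitone f) : Antitone (trunc f c) := by
  intro x y hxy
  unfold trunc
  split_ifs with hy hx hx
  · have h : trSlope f c * (y - c) ≤ trSlope f c * (x - c) :=
      mul_le_mul_of_nonpos_left (sub_le_sub_right hxy c) (trSlope_nonpos hanti)
    linarith
  · exact absurd (lt_of_le_of_lt hxy hy) hx
  · have h1 : 0 ≤ (-(trSlope f c)) * (-(x - c)) :=
      mul_nonneg (by linarith [trSlope_nonpos (f := f) (c := c) hanti]) (by linarith)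
    have h2 : f y ≤ f c := hanti (not_lt.1 hy)
    nlinarith
  · exact hanti hxy

lemma trunc_convex (hcvx : ConvexOn ℝ univ f) : ConvexOn ℝ univ (trunc f c) := by
  set s := trSlope f c with hs
  apply convexOn_of_slope_mono_adjacent convex_univ
  intro x y z _ _ hxy hyz
  unfold trunc
  rcases lt_or_ge y c with hy | hy
  · -- y < c, hence x < c
    have hx : x < c := lt_trans hxy hy
    rw [if_pos hx, if_pos hy]
    have hLHS : (f c + s * (y - c) - (f c + s * (x - c))) / (y - x) = s := by
      rw [div_eq_iff (sub_ne_zero.2 (ne_of_gt hxy))]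
      ring
    rw [hLHS]
    have hz : f c + s * (z - c) ≤ if z < c then f c + s * (z - c) else f z := by
      split_ifs with h
      · exact le_refl _
      · exact line_le hcvx z
    rw [le_div_iff₀ (by linarith)]
    set gz := if z < c then f c + s * (z - c) else f z
    nlinarith
  · -- c ≤ y, hence c < z, trunc y = f y, trunc z = f z
    have hyz' : ¬ y < c := not_lt.2 hy
    have hz' : ¬ z < c := not_lt.2 (le_trans hy hyz.le)
    rw [if_neg hyz', if_neg hz']
    rcases lt_or_ge x c with hx | hx
    · rw [if_pos hx]
      rw [div_le_div_iff₀ (by linarith) (by linarith)]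
      -- (f y - (f c + s (x - c))) (z - y) ≤ (f z - f y)(y - x)
      rcases eq_or_lt_of_le hy with hyc | hyc
      · -- y = c
        subst hyc
        have h := trSlope_le hcvx hyz
        rw [le_div_iff₀ (by linarith)] at h
        nlinarith
      · -- c < y
        have hne : z - y ≠ 0 := by intro h; simp only [sub_eq_zero] at h; exact absurd h.symm (ne_of_lt hyz)
        have h1 := hcvx.slope_mono_adjacent (mem_univ c) (mem_univ z) hyc hyz
        have h2 := trSlope_le hcvx hyc
        have h3 : s ≤ (f z - f y) / (z - y) := le_trans h2 h1
        have h4 : f y - f c ≤ (f z - f y) / (z - y) * (y - c) := by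
          have h := mul_le_mul_of_nonneg_right h1 (show (0:ℝ) ≤ y - c by linarith)
          rwa [div_mul_cancel₀ _ (show y - c ≠ 0 by intro hh; rw [sub_eq_zero] at hh; exact absurd hh.symm (ne_of_lt hyc))] at h
        have h5 : s * (c - x) ≤ (f z - f y) / (z - y) * (c - x) :=
          mul_le_mul_of_nonneg_right h3 (by linarith)
        have h6 : f y - (f c + s * (x - c)) ≤ (f z - f y) / (z - y) * (y - x) := by
          have : (f z - f y) / (z - y) * (y - x)
              = (f z - f y) / (z - y) * (y - c) + (f z - f y) / (z - y) * (c - x) := by ring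
          nlinarith
        have h9 : (f z - f y) / (z - y) * (y - x) * (z - y) = (f z - f y) * (y - x) := by
          rw [div_mul_eq_mul_div, div_mul_eq_mul_div, div_eq_iff hne]
        nlinarith [mul_le_mul_of_nonneg_right h6 (show (0:ℝ) ≤ z - y by linarith)]
    · rw [if_neg (not_lt.2 hx)]
      exact hcvx.slope_mono_adjacent (mem_univ x) (mem_univ z) hxy hyz

end trunc

lemma trunc_integrable {f : ℝ → ℝ} {c : ℝ} (hf0 : ∀ x, 0 ≤ f x) (hcvx : ConvexOn ℝ univ f)
    (hanti : Antitone f) (μ : Measure ℝ) [IsFiniteMeasure μ]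
    (hid : Integrable (fun x => x) μ) : Integrable (trunc f c) μ := by
  have hg : Integrable (fun x => f c + |trSlope f c| * |x - c|) μ :=
    (integrable_const _).add (((hid.sub (integrable_const c)).abs).const_mul _)
  refine hg.mono' ((trunc_anti hanti).measurable).aestronglyMeasurable (ae_of_all _ fun x => ?_)
  rw [Real.norm_eq_abs, abs_of_nonneg (trunc_nonneg hf0 hanti x)]
  unfold trunc
  split_ifs with h
  · have h1 : trSlope f c * (x - c) ≤ |trSlope f c| * |x - c| := by
      calc trSlope f c * (x - c) ≤ |trSlope f c * (x - c)| := le_abs_self _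
        _ = |trSlope f c| * |x - c| := abs_mul _ _
    linarith
  · have h1 : f x ≤ f c := hanti (not_lt.1 h)
    have h2 : 0 ≤ |trSlope f c| * |x - c| := mul_nonneg (abs_nonneg _) (abs_nonneg _)
    linarith

noncomputable def upM (η η' : Measure ℝ) : Measure ℝ :=
  (volume.restrict (Set.Icc 0 (mmass η))).map fun u => max (quant η u) (quant η' u)

theorem up_le_pcd (η η' χ : Measure ℝ)
    [IsFiniteMeasure η] [IsFiniteMeasure η'] [IsFiniteMeasure χ]
    (hη : Integrable (fun x => x) η) (hη' : Integrable (fun x => x) η')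
    (hχ : Integrable (fun x => x) χ)
    (hmass : η Set.univ = η' Set.univ)
    (h1 : le_pcd η χ) (h2 : le_pcd η' χ) :
    le_pcd (upM η η') χ := by
  intro f hf0 hcvx hanti hfU hfχ
  have hmm' : mmass η' = mmass η := by unfold mmass; rw [hmass]
  have hIoo : volume.restrict (Icc (0:ℝ) (mmass η)) = volume.restrict (Ioo 0 (mmass η)) :=
    (Measure.restrict_congr_set Ioo_ae_eq_Icc).symm
  have hupM : upM η η'
      = (volume.restrict (Ioo 0 (mmass η))).map (fun u => max (quant η u) (quant η' u)) := by
    rw [upM, hIoo]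
  have hqη : AEMeasurable (quant η) (volume.restrict (Ioo 0 (mmass η))) :=
    aemeasurable_restrict_of_monotoneOn measurableSet_Ioo (quant_monoOn η)
  have hqη' : AEMeasurable (quant η') (volume.restrict (Ioo 0 (mmass η))) :=
    aemeasurable_restrict_of_monotoneOn measurableSet_Ioo (hmm' ▸ quant_monoOn η')
  have hmax : AEMeasurable (fun u => max (quant η u) (quant η' u))
      (volume.restrict (Ioo 0 (mmass η))) := hqη.max hqη'
  -- per-n bound
  have key : ∀ n : ℕ, ∫⁻ x, ENNReal.ofReal (trunc f (-(n:ℝ)) x) ∂(upM η η')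
      ≤ ENNReal.ofReal (∫ x, f x ∂χ) := by
    intro n
    set c : ℝ := -(n:ℝ) with hc
    have hganti : Antitone (trunc f c) := trunc_anti hanti
    have hgmeas : Measurable (trunc f c) := hganti.measurable
    have hg0 : ∀ x, 0 ≤ trunc f c x := trunc_nonneg hf0 hanti
    have hgle : ∀ x, trunc f c x ≤ f x := trunc_le hcvx
    have hgη : Integrable (trunc f c) η := trunc_integrable hf0 hcvx hanti η hη
    have hgχ : Integrable (trunc f c) χ :=
      hfχ.mono' hgmeas.aestronglyMeasurable (ae_of_all _ fun x => by
        rw [Real.norm_eq_abs, abs_of_nonneg (hg0 x)]; exact hgle x)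
    calc ∫⁻ x, ENNReal.ofReal (trunc f c x) ∂(upM η η')
        = ∫⁻ u in Ioo 0 (mmass η),
            ENNReal.ofReal (trunc f c (max (quant η u) (quant η' u))) := by
          rw [hupM]
          exact lintegral_map' (ENNReal.measurable_ofReal.comp hgmeas).aemeasurable hmax
      _ ≤ ∫⁻ u in Ioo 0 (mmass η), ENNReal.ofReal (trunc f c (quant η u)) :=
          lintegral_mono fun u => ENNReal.ofReal_le_ofReal (hganti (le_max_left _ _))
      _ = ∫⁻ x, ENNReal.ofReal (trunc f c x) ∂η := by
          conv_rhs => rw [← map_quant η]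
          exact (lintegral_map' (ENNReal.measurable_ofReal.comp hgmeas).aemeasurable hqη).symm
      _ = ENNReal.ofReal (∫ x, trunc f c x ∂η) :=
          (ofReal_integral_eq_lintegral_ofReal hgη (ae_of_all _ hg0)).symm
      _ ≤ ENNReal.ofReal (∫ x, f x ∂χ) := by
          apply ENNReal.ofReal_le_ofReal
          calc ∫ x, trunc f c x ∂η
              ≤ ∫ x, trunc f c x ∂χ :=
                h1 (trunc f c) hg0 (trunc_convex hcvx) hganti hgη hgχ
            _ ≤ ∫ x, f x ∂χ := integral_mono hgχ hfχ hgle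
  -- liminf
  have hlim : ∫⁻ x, ENNReal.ofReal (f x) ∂(upM η η') ≤ ENNReal.ofReal (∫ x, f x ∂χ) := by
    have hptw : ∀ x : ℝ, ENNReal.ofReal (f x)
        = liminf (fun n : ℕ => ENNReal.ofReal (trunc f (-(n:ℝ)) x)) atTop := by
      intro x
      have hev : ∀ᶠ n : ℕ in atTop,
          ENNReal.ofReal (trunc f (-(n:ℝ)) x) = ENNReal.ofReal (f x) := by
        obtain ⟨N, hN⟩ := exists_nat_ge (-x)
        refine eventually_atTop.2 ⟨N, fun n hn => ?_⟩
        have hNn : (N:ℝ) ≤ (n:ℝ) := by exact_mod_cast hn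
        rw [trunc_eq x (by linarith)]
      rw [liminf_congr hev, liminf_const]
    calc ∫⁻ x, ENNReal.ofReal (f x) ∂(upM η η')
        = ∫⁻ x, liminf (fun n : ℕ => ENNReal.ofReal (trunc f (-(n:ℝ)) x)) atTop ∂(upM η η') := by
          congr 1; ext x; exact hptw x
      _ ≤ liminf (fun n : ℕ => ∫⁻ x, ENNReal.ofReal (trunc f (-(n:ℝ)) x) ∂(upM η η')) atTop :=
          lintegral_liminf_le fun n =>
            ENNReal.measurable_ofReal.comp (trunc_anti hanti).measurable
      _ ≤ liminf (fun _ : ℕ => ENNReal.ofReal (∫ x, f x ∂χ)) atTop :=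
          liminf_le_liminf (Eventually.of_forall key)
      _ = ENNReal.ofReal (∫ x, f x ∂χ) := liminf_const _
  rw [integral_eq_lintegral_of_nonneg_ae (ae_of_all _ hf0) hfU.aestronglyMeasurable]
  calc (∫⁻ x, ENNReal.ofReal (f x) ∂(upM η η')).toReal
      ≤ (ENNReal.ofReal (∫ x, f x ∂χ)).toReal :=
        ENNReal.toReal_mono ENNReal.ofReal_ne_top hlim
    _ = ∫ x, f x ∂χ := ENNReal.toReal_ofReal (integral_nonneg hf0)
end

section
/- If f, g : ℝ → ℝ are each differences of convex functions and their right derivatives satisfy f'_+(x) ≤ g'_+(x) for all x, then the convex hulls satisfy (f^c)'_+(x) ≤ (g^c)'_+(x) for all x ∈ ℝ (whenever the convex hulls are finite). -/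
open MeasureTheory Set

/-- The convex hull of a function: the largest convex function below it. -/
noncomputable def convHullFn (h : ℝ → ℝ) : ℝ → ℝ := fun x =>
  sSup {y : ℝ | ∃ g : ℝ → ℝ, ConvexOn ℝ Set.univ g ∧ (∀ z, g z ≤ h z) ∧ y = g x}

open Filter Topology

lemma hullSet_bddAbove (h : ℝ → ℝ) (x : ℝ) :
    BddAbove {y : ℝ | ∃ g : ℝ → ℝ, ConvexOn ℝ Set.univ g ∧ (∀ z, g z ≤ h z) ∧ y = g x} := by
  refine ⟨h x, ?_⟩
  rintro y ⟨g, -, hle, rfl⟩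
  exact hle x

lemma le_convHullFn {h φ : ℝ → ℝ} (hφ : ConvexOn ℝ Set.univ φ) (hle : ∀ z, φ z ≤ h z) (x : ℝ) :
    φ x ≤ convHullFn h x :=
  le_csSup (hullSet_bddAbove h x) ⟨φ, hφ, hle, rfl⟩

lemma convHullFn_le {h : ℝ → ℝ} (hmin : ∃ φ : ℝ → ℝ, ConvexOn ℝ Set.univ φ ∧ ∀ z, φ z ≤ h z)
    (x : ℝ) : convHullFn h x ≤ h x := by
  obtain ⟨φ, hφ, hφle⟩ := hmin
  refine csSup_le ⟨φ x, φ, hφ, hφle, rfl⟩ ?_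
  rintro y ⟨g, -, hle, rfl⟩
  exact hle x

lemma convHullFn_convexOn {h : ℝ → ℝ}
    (hmin : ∃ φ : ℝ → ℝ, ConvexOn ℝ Set.univ φ ∧ ∀ z, φ z ≤ h z) :
    ConvexOn ℝ Set.univ (convHullFn h) := by
  obtain ⟨φ₀, hφ₀, hφ₀le⟩ := hmin
  refine ⟨convex_univ, fun x _ y _ a b ha hb hab => ?_⟩
  refine csSup_le ⟨φ₀ (a • x + b • y), φ₀, hφ₀, hφ₀le, rfl⟩ ?_
  rintro v ⟨ψ, hψ, hψle, rfl⟩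
  calc ψ (a • x + b • y) ≤ a • ψ x + b • ψ y := hψ.2 (mem_univ x) (mem_univ y) ha hb hab
    _ ≤ a • convHullFn h x + b • convHullFn h y := by
        simp only [smul_eq_mul]
        gcongr
        · exact le_convHullFn hψ hψle x
        · exact le_convHullFn hψ hψle y

lemma line_convexOn (c m x₀ : ℝ) : ConvexOn ℝ Set.univ (fun y : ℝ => c + m * (y - x₀)) := by
  refine ⟨convex_univ, fun x _ y _ a b ha hb hab => ?_⟩
  simp only [smul_eq_mul]
  apply le_of_eq
  linear_combination (m * x₀ - c) * hab

lemma cvx_slope_mono {H : ℝ → ℝ} (hH : ConvexOn ℝ Set.univ H) {a x y : ℝ}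
    (hx : x ≠ a) (hy : y ≠ a) (hxy : x ≤ y) :
    (H x - H a) / (x - a) ≤ (H y - H a) / (y - a) :=
  hH.secant_mono trivial trivial trivial hx hy hxy

lemma cvx_slope_tendsto {H : ℝ → ℝ} (hH : ConvexOn ℝ Set.univ H) (x : ℝ) :
    Tendsto (fun y => (H y - H x) / (y - x)) (nhdsWithin x (Set.Ioi x))
      (nhds (sInf ((fun y => (H y - H x) / (y - x)) '' Set.Ioi x))) := by
  apply MonotoneOn.tendsto_nhdsGT
  · intro u hu v hv huv
    exact cvx_slope_mono hH (ne_of_gt hu) (ne_of_gt hv) huv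
  · refine ⟨(H x - H (x - 1)) / (x - (x - 1)), ?_⟩
    rintro _ ⟨y, hy, rfl⟩
    have h1 : (H (x - 1) - H x) / ((x - 1) - x) ≤ (H y - H x) / (y - x) :=
      cvx_slope_mono hH (by linarith) (ne_of_gt hy) (by linarith [mem_Ioi.mp hy])
    calc (H x - H (x - 1)) / (x - (x - 1)) = (H (x - 1) - H x) / ((x - 1) - x) := by
          rw [div_eq_div_iff] <;> ring_nf <;> norm_num
      _ ≤ _ := h1

lemma convex_hasDerivWithinAt_Ioi {H : ℝ → ℝ} (hH : ConvexOn ℝ Set.univ H) (x : ℝ) :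
    HasDerivWithinAt H (derivWithin H (Set.Ioi x) x) (Set.Ioi x) x := by
  have key : HasDerivWithinAt H (sInf ((fun y => (H y - H x) / (y - x)) '' Set.Ioi x))
      (Set.Ioi x) x := by
    rw [hasDerivWithinAt_iff_tendsto_slope]
    have hs : Set.Ioi x \ {x} = Set.Ioi x := by
      apply diff_singleton_eq_self; simp
    rw [hs]
    have : (slope H x) = fun y => (H y - H x) / (y - x) := by
      funext y; rw [slope_def_field]
    rw [this]
    exact cvx_slope_tendsto hH x
  have h2 := key.derivWithin (uniqueDiffWithinAt_Ioi x)
  rw [h2]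
  exact key

lemma convex_tangent_le {H : ℝ → ℝ} (hH : ConvexOn ℝ Set.univ H) (x₀ y : ℝ) :
    H x₀ + derivWithin H (Set.Ioi x₀) x₀ * (y - x₀) ≤ H y := by
  set d := derivWithin H (Set.Ioi x₀) x₀ with hd
  have htend : Tendsto (fun z => (H z - H x₀) / (z - x₀)) (nhdsWithin x₀ (Set.Ioi x₀)) (nhds d) := by
    have key := convex_hasDerivWithinAt_Ioi hH x₀
    rw [hasDerivWithinAt_iff_tendsto_slope] at key
    have hs : Set.Ioi x₀ \ {x₀} = Set.Ioi x₀ := by apply diff_singleton_eq_self; simp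
    rw [hs] at key
    have : (slope H x₀) = fun z => (H z - H x₀) / (z - x₀) := by
      funext z; rw [slope_def_field]
    rwa [this] at key
  rcases lt_trichotomy y x₀ with hy | hy | hy
  · -- y < x₀ : slope(y) ≤ d
    have hslope : (H y - H x₀) / (y - x₀) ≤ d := by
      refine ge_of_tendsto htend ?_
      filter_upwards [self_mem_nhdsWithin] with z hz
      exact cvx_slope_mono hH (ne_of_lt hy) (ne_of_gt (mem_Ioi.mp hz)) (le_of_lt (hy.trans hz))
    have hneg : y - x₀ < 0 := by linarith
    rw [div_le_iff_of_neg hneg] at hslope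
    linarith
  · subst hy; simp
  · -- x₀ < y : d ≤ slope(y)
    have hslope : d ≤ (H y - H x₀) / (y - x₀) := by
      refine le_of_tendsto htend ?_
      filter_upwards [Ioo_mem_nhdsGT_of_mem (Set.left_mem_Ico.mpr hy)] with z hz
      exact cvx_slope_mono hH (ne_of_gt (mem_Ioo.mp hz).1) (ne_of_gt hy) (le_of_lt (mem_Ioo.mp hz).2)
    have hpos : 0 < y - x₀ := by linarith
    rw [le_div_iff₀ hpos] at hslope
    linarith

lemma le_derivWithin_Ioi {H : ℝ → ℝ} (hH : ConvexOn ℝ Set.univ H) {x₀ a : ℝ}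
    (hall : ∀ y, x₀ < y → H x₀ + a * (y - x₀) ≤ H y) :
    a ≤ derivWithin H (Set.Ioi x₀) x₀ := by
  have htend : Tendsto (fun z => (H z - H x₀) / (z - x₀)) (nhdsWithin x₀ (Set.Ioi x₀))
      (nhds (derivWithin H (Set.Ioi x₀) x₀)) := by
    have key := convex_hasDerivWithinAt_Ioi hH x₀
    rw [hasDerivWithinAt_iff_tendsto_slope] at key
    have hs : Set.Ioi x₀ \ {x₀} = Set.Ioi x₀ := by apply diff_singleton_eq_self; simp
    rw [hs] at key
    have : (slope H x₀) = fun z => (H z - H x₀) / (z - x₀) := by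
      funext z; rw [slope_def_field]
    rwa [this] at key
  refine ge_of_tendsto htend ?_
  filter_upwards [self_mem_nhdsWithin] with z hz
  have h1 := hall z (mem_Ioi.mp hz)
  have hpos : 0 < z - x₀ := by simpa using sub_pos.mpr (mem_Ioi.mp hz)
  rw [le_div_iff₀ hpos]
  linarith

lemma convex_continuous {H : ℝ → ℝ} (hH : ConvexOn ℝ Set.univ H) : Continuous H := by
  rw [← continuousOn_univ]
  exact hH.continuousOn isOpen_univ

/-- If `h` stays at least `μ` above its convex hull on `[a,b]`, the hull is affine there. -/
lemma hull_affine_of_gap {h : ℝ → ℝ}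
    (hmin : ∃ φ : ℝ → ℝ, ConvexOn ℝ Set.univ φ ∧ ∀ z, φ z ≤ h z)
    {a b μ : ℝ} (hab : a < b) (hμ : 0 < μ)
    (hgap : ∀ y ∈ Set.Icc a b, convHullFn h y + μ ≤ h y) :
    ∀ y ∈ Set.Icc a b,
      convHullFn h y
        = convHullFn h a + (convHullFn h b - convHullFn h a) / (b - a) * (y - a) := by
  set F := convHullFn h with hFdef
  have hFc : ConvexOn ℝ Set.univ F := convHullFn_convexOn hmin
  have hFcont : Continuous F := convex_continuous hFc
  set σ := (F b - F a) / (b - a) with hσ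
  have hba : (0:ℝ) < b - a := by linarith
  have hTb : σ * (b - a) = F b - F a := by rw [hσ]; field_simp
  -- F ≤ T on [a,b]
  have key1 : ∀ y ∈ Set.Icc a b, F y ≤ F a + σ * (y - a) := by
    rintro y ⟨h1, h2⟩
    rcases eq_or_lt_of_le h1 with rfl | h1'
    · simp
    rcases eq_or_lt_of_le h2 with rfl | h2'
    · linarith
    have w1 : (0:ℝ) ≤ (b - y) / (b - a) := div_nonneg (by linarith) (by linarith)
    have w2 : (0:ℝ) ≤ (y - a) / (b - a) := div_nonneg (by linarith) (by linarith)
    have wsum : (b - y) / (b - a) + (y - a) / (b - a) = 1 := by field_simp; ring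
    have hcomb : ((b - y) / (b - a)) • a + ((y - a) / (b - a)) • b = y := by
      simp only [smul_eq_mul]; field_simp; ring
    have hcvx := hFc.2 (mem_univ a) (mem_univ b) w1 w2 wsum
    rw [hcomb] at hcvx
    calc F y ≤ ((b - y)/(b - a)) • F a + ((y - a)/(b - a)) • F b := hcvx
      _ = F a + σ * (y - a) := by
          simp only [smul_eq_mul, hσ]; field_simp; ring
  -- T ≤ F outside (a,b)
  have key2 : ∀ y, y ≤ a ∨ b ≤ y → F a + σ * (y - a) ≤ F y := by
    rintro y (hy | hy)
    · rcases eq_or_lt_of_le hy with rfl | hy'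
      · simp
      have hs := cvx_slope_mono hFc (ne_of_lt hy') (ne_of_gt hab) (by linarith : y ≤ b)
      rw [div_le_iff_of_neg (by linarith : y - a < 0)] at hs
      rw [← hσ] at hs
      linarith
    · rcases eq_or_lt_of_le hy with rfl | hy'
      · linarith
      have hs := cvx_slope_mono hFc (ne_of_gt hab) (ne_of_gt (hab.trans hy')) (le_of_lt hy')
      rw [← hσ, le_div_iff₀ (by linarith : (0:ℝ) < y - a)] at hs
      linarith
  -- max of T - F on [a,b]
  have hcontTF : Continuous fun y => F a + σ * (y - a) - F y := by fun_prop
  obtain ⟨q, hqmem, hqmax⟩ :=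
    isCompact_Icc.exists_isMaxOn (Set.nonempty_Icc.mpr (le_of_lt hab)) hcontTF.continuousOn
  set ν := F a + σ * (q - a) - F q with hν
  have hmax : ∀ y ∈ Set.Icc a b, F a + σ * (y - a) - F y ≤ ν := by
    intro y hy
    have := hqmax hy
    simpa only [Set.mem_setOf_eq] using this
  rcases le_or_gt ν 0 with hν0 | hν0
  · -- T = F on [a,b]
    intro y hy
    have h1 := key1 y hy
    have h2 := hmax y hy
    linarith
  · -- build a better minorant: contradiction
    exfalso
    set ε := min μ ν with hε
    have hεpos : 0 < ε := lt_min hμ hν0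
    set φ : ℝ → ℝ := fun y => max (F y) ((F a - ν + ε) + σ * (y - a)) with hφ
    have hφc : ConvexOn ℝ Set.univ φ := by
      have := hFc.sup (line_convexOn (F a - ν + ε) σ a)
      exact this
    have hφle : ∀ z, φ z ≤ h z := by
      intro z
      have hF_le_h : F z ≤ h z := convHullFn_le hmin z
      have h8 : ε ≤ ν := min_le_right _ _
      rw [hφ]
      refine max_le hF_le_h ?_
      rcases le_or_gt z a with hz | hz
      · have := key2 z (Or.inl hz)
        linarith
      rcases le_or_gt b z with hz' | hz'
      · have := key2 z (Or.inr hz')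
        linarith
      · have h3 := hmax z ⟨le_of_lt hz, le_of_lt hz'⟩
        have h4 := hgap z ⟨le_of_lt hz, le_of_lt hz'⟩
        have h5 : ε ≤ μ := min_le_left _ _
        linarith
    have hq := le_convHullFn hφc hφle q
    rw [hφ] at hq
    have h6 : (F a - ν + ε) + σ * (q - a) ≤ F q := le_trans (le_max_right _ _) hq
    have h8 : ε ≤ ν := min_le_right _ _
    linarith

/-- Monotonicity from nonnegative right derivatives. -/
lemma monotone_of_rightDeriv {m m' : ℝ → ℝ} (hc : Continuous m)
    (hd : ∀ x, HasDerivWithinAt m (m' x) (Set.Ici x) x) (h0 : ∀ x, 0 ≤ m' x) :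
    Monotone m := by
  intro a b hab
  rcases eq_or_lt_of_le hab with rfl | hab'
  · exact le_refl _
  · have key := image_le_of_deriv_right_le_deriv_boundary
      (f := fun x => m a - m x) (f' := fun x => -(m' x)) (a := a) (b := b)
      (B := fun _ => (0:ℝ)) (B' := fun _ => (0:ℝ))
      ((continuous_const.sub hc).continuousOn)
      (fun x _ => by simpa [Pi.sub_def] using ((hasDerivWithinAt_const x (Set.Ici x) (m a)).sub (hd x)))
      (by simp)
      (continuous_const.continuousOn)
      (fun x _ => hasDerivWithinAt_const _ _ _)
      (fun x _ => by simpa using h0 x)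
    have hb := key (Set.right_mem_Icc.mpr (le_of_lt hab'))
    linarith

theorem convHull_rightDeriv_mono (f g : ℝ → ℝ)
    (hf : ∃ f₁ f₂ : ℝ → ℝ, ConvexOn ℝ Set.univ f₁ ∧ ConvexOn ℝ Set.univ f₂ ∧ f = f₁ - f₂)
    (hg : ∃ g₁ g₂ : ℝ → ℝ, ConvexOn ℝ Set.univ g₁ ∧ ConvexOn ℝ Set.univ g₂ ∧ g = g₁ - g₂)
    (hfmin : ∃ φ : ℝ → ℝ, ConvexOn ℝ Set.univ φ ∧ ∀ z, φ z ≤ f z)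
    (hgmin : ∃ φ : ℝ → ℝ, ConvexOn ℝ Set.univ φ ∧ ∀ z, φ z ≤ g z)
    (hderiv : ∀ x : ℝ, derivWithin f (Set.Ioi x) x ≤ derivWithin g (Set.Ioi x) x) :
    ∀ x : ℝ, derivWithin (convHullFn f) (Set.Ioi x) x ≤
      derivWithin (convHullFn g) (Set.Ioi x) x := by
  obtain ⟨f₁, f₂, hf₁, hf₂, hfe⟩ := hf
  obtain ⟨g₁, g₂, hg₁, hg₂, hge⟩ := hg
  -- continuity of f and g
  have hfc : Continuous f := by
    rw [hfe]; exact (convex_continuous hf₁).sub (convex_continuous hf₂)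
  have hgc : Continuous g := by
    rw [hge]; exact (convex_continuous hg₁).sub (convex_continuous hg₂)
  -- right derivatives of f and g exist
  have hfd : ∀ x, HasDerivWithinAt f (derivWithin f (Set.Ioi x) x) (Set.Ioi x) x := by
    intro x
    have h3 : HasDerivWithinAt f
        (derivWithin f₁ (Set.Ioi x) x - derivWithin f₂ (Set.Ioi x) x) (Set.Ioi x) x := by
      rw [hfe]; exact (convex_hasDerivWithinAt_Ioi hf₁ x).sub (convex_hasDerivWithinAt_Ioi hf₂ x)
    have h4 := h3.derivWithin (uniqueDiffWithinAt_Ioi x)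
    rw [h4]; exact h3
  have hgd : ∀ x, HasDerivWithinAt g (derivWithin g (Set.Ioi x) x) (Set.Ioi x) x := by
    intro x
    have h3 : HasDerivWithinAt g
        (derivWithin g₁ (Set.Ioi x) x - derivWithin g₂ (Set.Ioi x) x) (Set.Ioi x) x := by
      rw [hge]; exact (convex_hasDerivWithinAt_Ioi hg₁ x).sub (convex_hasDerivWithinAt_Ioi hg₂ x)
    have h4 := h3.derivWithin (uniqueDiffWithinAt_Ioi x)
    rw [h4]; exact h3
  -- g - f is monotone
  have hmono : Monotone (fun x => g x - f x) := by
    apply monotone_of_rightDeriv (m' := fun x =>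
      derivWithin g (Set.Ioi x) x - derivWithin f (Set.Ioi x) x) (hgc.sub hfc)
    · intro x
      exact (((hgd x).sub (hfd x))).Ici_of_Ioi
    · intro x
      have := hderiv x
      linarith
  intro x₀
  by_contra hcon
  push_neg at hcon
  set F := convHullFn f with hF
  set G := convHullFn g with hG
  have hFc : ConvexOn ℝ Set.univ F := convHullFn_convexOn hfmin
  have hGc : ConvexOn ℝ Set.univ G := convHullFn_convexOn hgmin
  have hFcont : Continuous F := convex_continuous hFc
  set t' := derivWithin F (Set.Ioi x₀) x₀ with ht'
  set s := derivWithin G (Set.Ioi x₀) x₀ with hsdef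
  have hst : s < t' := hcon
  set t := (s + t') / 2 with htdef
  have hst1 : s < t := by rw [htdef]; linarith
  have htt' : t < t' := by rw [htdef]; linarith
  have tanF : ∀ y, F x₀ + t' * (y - x₀) ≤ F y := fun y => convex_tangent_le hFc x₀ y
  have tanG : ∀ y, G x₀ + s * (y - x₀) ≤ G y := fun y => convex_tangent_le hGc x₀ y
  have hFle : ∀ y, F y ≤ f y := convHullFn_le hfmin
  have hGle : ∀ y, G y ≤ g y := convHullFn_le hgmin
  -- Lemma β : there is a point above x₀ where g dips below the t-line through (x₀, G x₀)
  obtain ⟨y', hy'gt, hy'lt⟩ : ∃ y, x₀ < y ∧ g y < G x₀ + t * (y - x₀) := by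
    by_contra hno
    push_neg at hno
    have hψc : ConvexOn ℝ Set.univ
        (fun y => max (G x₀ + s * (y - x₀)) (G x₀ + t * (y - x₀))) := by
      have := (line_convexOn (G x₀) s x₀).sup (line_convexOn (G x₀) t x₀)
      exact this
    have hψle : ∀ z, max (G x₀ + s * (z - x₀)) (G x₀ + t * (z - x₀)) ≤ g z := by
      intro z
      rcases le_or_gt z x₀ with hz | hz
      · refine max_le (le_trans (tanG z) (hGle z)) ?_
        have h1 : G x₀ + t * (z - x₀) ≤ G x₀ + s * (z - x₀) := by nlinarith
        exact le_trans h1 (le_trans (tanG z) (hGle z))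
      · exact max_le (le_trans (tanG z) (hGle z)) (hno z hz)
    have hψG : ∀ z, x₀ < z → G x₀ + t * (z - x₀) ≤ G z := fun z hz =>
      le_trans (le_max_right _ _) (le_convHullFn hψc hψle z)
    have hts := le_derivWithin_Ioi hGc hψG
    rw [← hsdef] at hts
    linarith
  -- α : a point to the left of x₀ where f dips to the s-line through (x₀, F x₀)
  obtain ⟨α, hαle, hαf⟩ : ∃ α, α ≤ x₀ ∧ f α ≤ F x₀ + s * (α - x₀) := by
    rcases le_or_gt (f x₀) (F x₀) with hA | hB
    · exact ⟨x₀, le_refl _, by simpa using hA⟩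
    have hcontfF : Continuous fun y => f y - F y := hfc.sub hFcont
    set v := f x₀ - F x₀ with hv
    have hv0 : 0 < v := by rw [hv]; linarith
    obtain ⟨d, hd0, hdprop⟩ : ∃ d > 0, ∀ y ∈ Set.Icc (x₀ - d) (x₀ + d), F y + v/2 ≤ f y := by
      have h1 : ContinuousAt (fun y => f y - F y) x₀ := hcontfF.continuousAt
      rw [Metric.continuousAt_iff] at h1
      obtain ⟨δ, hδ0, hδ⟩ := h1 (v/2) (by linarith)
      refine ⟨δ/2, by linarith, ?_⟩
      intro y hy
      have hdist : dist y x₀ < δ := by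
        rw [Real.dist_eq, abs_lt]
        exact ⟨by linarith [hy.1], by linarith [hy.2]⟩
      have h2 := hδ hdist
      rw [Real.dist_eq, abs_lt] at h2
      have h3 := h2.1
      simp only [hv] at h3 ⊢
      linarith
    have haff := hull_affine_of_gap hfmin (show x₀ - d < x₀ + d by linarith)
      (show (0:ℝ) < v/2 by linarith) hdprop
    rw [← hF] at haff
    set σ0 := (F (x₀ + d) - F (x₀ - d)) / ((x₀ + d) - (x₀ - d)) with hσ0
    have haff' : ∀ y ∈ Set.Icc (x₀ - d) (x₀ + d), F y = F x₀ + σ0 * (y - x₀) := by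
      intro y hy
      have h1 := haff y hy
      have h2 := haff x₀ ⟨by linarith, by linarith⟩
      linear_combination h1 - h2
    have ht'σ : t' = σ0 := by
      have hle : t' ≤ σ0 := by
        have h1 := tanF (x₀ + d)
        have h2 := haff' (x₀ + d) ⟨by linarith, le_refl _⟩
        nlinarith [h1, h2]
      have hge : σ0 ≤ t' := by
        rw [ht']
        apply le_derivWithin_Ioi hFc
        intro y hy
        rcases le_or_gt y (x₀ + d) with hcase | hcase
        · exact le_of_eq (haff' y ⟨by linarith, hcase⟩).symm
        · have hs1 := cvx_slope_mono hFc (a := x₀)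
            (ne_of_gt (show x₀ < x₀ + d by linarith)) (ne_of_gt (show x₀ < y by linarith))
            (le_of_lt hcase)
          have h2 := haff' (x₀ + d) ⟨by linarith, le_refl _⟩
          rw [h2] at hs1
          have h3 : (F x₀ + σ0 * (x₀ + d - x₀) - F x₀) / (x₀ + d - x₀) = σ0 := by
            rw [add_sub_cancel_left, add_sub_cancel_left, mul_div_assoc, div_self (ne_of_gt hd0), mul_one]
          rw [h3] at hs1
          rw [le_div_iff₀ (show (0:ℝ) < y - x₀ by linarith)] at hs1
          linarith
      linarith
    have hFl : ∀ y ∈ Set.Icc (x₀ - d) x₀, F y = F x₀ + t' * (y - x₀) := by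
      intro y hy
      rw [ht'σ]
      exact haff' y ⟨hy.1, by linarith [hy.2]⟩
    by_cases hbdd : BddBelow {z : ℝ | z ≤ x₀ ∧ ∀ y ∈ Set.Icc z x₀, F y = F x₀ + t' * (y - x₀)}
    · -- bounded below : true contact exists in [A, x₀]
      set SetL := {z : ℝ | z ≤ x₀ ∧ ∀ y ∈ Set.Icc z x₀, F y = F x₀ + t' * (y - x₀)} with hSetL
      have hmemL : x₀ - d ∈ SetL := ⟨by linarith, hFl⟩
      have hne : SetL.Nonempty := ⟨x₀ - d, hmemL⟩
      set A := sInf SetL with hA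
      have hAle : A ≤ x₀ - d := csInf_le hbdd hmemL
      have hAx₀ : A < x₀ := by linarith
      have hFA' : ∀ y ∈ Set.Ioc A x₀, F y = F x₀ + t' * (y - x₀) := by
        intro y hy
        obtain ⟨z, hz, hzy⟩ := exists_lt_of_csInf_lt hne hy.1
        exact hz.2 y ⟨le_of_lt hzy, hy.2⟩
      have hFAA : F A = F x₀ + t' * (A - x₀) := by
        have hclosed : IsClosed {y : ℝ | F y - (F x₀ + t' * (y - x₀)) = 0} :=
          isClosed_eq (by fun_prop) continuous_const
        have hsub : Set.Ioc A x₀ ⊆ {y : ℝ | F y - (F x₀ + t' * (y - x₀)) = 0} := by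
          intro y hy
          simp only [Set.mem_setOf_eq]
          rw [hFA' y hy]; ring
        have hclA : A ∈ closure (Set.Ioc A x₀) := by
          rw [closure_Ioc (ne_of_lt hAx₀)]
          exact ⟨le_refl _, le_of_lt hAx₀⟩
        have hmem3 := (hclosed.closure_subset_iff.mpr hsub) hclA
        simp only [Set.mem_setOf_eq] at hmem3
        linarith
      have hFA : ∀ y ∈ Set.Icc A x₀, F y = F x₀ + t' * (y - x₀) := by
        intro y hy
        rcases eq_or_lt_of_le hy.1 with rfl | h1'
        · exact hFAA
        · exact hFA' y ⟨h1', hy.2⟩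
      by_cases hcontact : ∃ w ∈ Set.Icc A x₀, f w ≤ F w
      · obtain ⟨w, hw, hfw⟩ := hcontact
        refine ⟨w, hw.2, ?_⟩
        have h1 := hFA w hw
        have h2 : F x₀ + t' * (w - x₀) ≤ F x₀ + s * (w - x₀) := by
          nlinarith [hw.2]
        linarith [h1 ▸ hfw]
      · exfalso
        push_neg at hcontact
        obtain ⟨q, hq, hqmin⟩ := isCompact_Icc.exists_isMinOn
          (Set.nonempty_Icc.mpr (le_of_lt hAx₀)) hcontfF.continuousOn
        set μ := f q - F q with hμdef
        have hμ0 : 0 < μ := by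
          have := hcontact q hq
          rw [hμdef]; linarith
        have hqmin' : ∀ y ∈ Set.Icc A x₀, μ ≤ f y - F y := by
          intro y hy
          have := hqmin hy
          simpa only [Set.mem_setOf_eq] using this
        obtain ⟨d₂, hd₂0, hd₂⟩ : ∃ d₂ > 0, ∀ y ∈ Set.Icc (A - d₂) A, F y + μ/2 ≤ f y := by
          have h1 : ContinuousAt (fun y => f y - F y) A := hcontfF.continuousAt
          rw [Metric.continuousAt_iff] at h1
          obtain ⟨δ, hδ0, hδ⟩ := h1 (μ/2) (by linarith)
          refine ⟨δ/2, by linarith, ?_⟩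
          intro y hy
          have hdist : dist y A < δ := by
            rw [Real.dist_eq, abs_lt]
            exact ⟨by linarith [hy.1], by linarith [hy.2]⟩
          have h2 := hδ hdist
          rw [Real.dist_eq, abs_lt] at h2
          have h3 := h2.1
          have h4 : μ ≤ f A - F A := hqmin' A ⟨le_refl _, le_of_lt hAx₀⟩
          linarith
        have hgap2 : ∀ y ∈ Set.Icc (A - d₂) x₀, F y + μ/2 ≤ f y := by
          intro y hy
          rcases le_or_gt y A with h1 | h1
          · exact hd₂ y ⟨hy.1, h1⟩
          · have := hqmin' y ⟨le_of_lt h1, hy.2⟩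
            linarith
        have haff2 := hull_affine_of_gap hfmin (show A - d₂ < x₀ by linarith)
          (show (0:ℝ) < μ/2 by linarith) hgap2
        rw [← hF] at haff2
        set τ := (F x₀ - F (A - d₂)) / (x₀ - (A - d₂)) with hτ
        have haff2' : ∀ y ∈ Set.Icc (A - d₂) x₀, F y = F x₀ + τ * (y - x₀) := by
          intro y hy
          have h1 := haff2 y hy
          have h2 := haff2 x₀ ⟨by linarith, le_refl _⟩
          linear_combination h1 - h2
        have hττ' : τ = t' := by
          have h1 := haff2' A ⟨by linarith, le_of_lt hAx₀⟩
          have h3 : τ * (A - x₀) = t' * (A - x₀) := by linarith [hFAA]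
          have h4 : A - x₀ ≠ 0 := by
            intro hc; rw [sub_eq_zero] at hc; exact (ne_of_lt hAx₀) hc
          exact mul_right_cancel₀ h4 h3
        have hmem2 : A - d₂ ∈ SetL := by
          refine ⟨by linarith, ?_⟩
          intro y hy
          rw [← hττ']
          exact haff2' y ⟨hy.1, hy.2⟩
        have := csInf_le hbdd hmem2
        rw [← hA] at this
        linarith
    · -- unbounded below : F is the tangent line on all of (−∞, x₀]
      have hFull : ∀ y, y ≤ x₀ → F y = F x₀ + t' * (y - x₀) := by
        intro y hy
        rw [not_bddBelow_iff] at hbdd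
        obtain ⟨z, hzmem, hzlt⟩ := hbdd y
        exact hzmem.2 y ⟨le_of_lt hzlt, hy⟩
      by_contra hno
      push_neg at hno
      have hφc : ConvexOn ℝ Set.univ (fun y => max (F y) (F x₀ + s * (y - x₀))) := by
        have := hFc.sup (line_convexOn (F x₀) s x₀)
        exact this
      have hφle : ∀ z, max (F z) (F x₀ + s * (z - x₀)) ≤ f z := by
        intro z
        rcases le_or_gt z x₀ with hz | hz
        · exact max_le (hFle z) (le_of_lt (hno z hz))
        · refine max_le (hFle z) ?_
          have h1 : F x₀ + s * (z - x₀) ≤ F x₀ + t' * (z - x₀) := by nlinarith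
          exact le_trans h1 (le_trans (tanF z) (hFle z))
      have hkey := le_convHullFn hφc hφle (x₀ - 1)
      rw [← hF] at hkey
      have h2 : F x₀ + s * ((x₀ - 1) - x₀) ≤ F (x₀ - 1) := le_trans (le_max_right _ _) hkey
      rw [hFull (x₀ - 1) (by linarith)] at h2
      nlinarith [h2]
  -- final contradiction
  have hm1 : G x₀ - F x₀ ≤ g α - f α := by
    have h1 := tanG α
    have h2 := hGle α
    linarith [hαf]
  have hm2 : g y' - f y' < G x₀ - F x₀ := by
    have h1 := tanF y'
    have h2 := hFle y'
    nlinarith [mul_pos (sub_pos.mpr htt') (sub_pos.mpr hy'gt)]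
  have hmono2 := hmono (le_trans hαle (le_of_lt hy'gt))
  simp only at hmono2
  linarith
end
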